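/- Suppose X⋆ is μ-incoherent and the quadruple F₊ = (U₊,V₊,W₊,S₊) satisfies dist(F₊,F⋆) ≤ ε·σ_min(X⋆) for some ε < 1. Set B = C_B·√(μ·r)·σ_max(X⋆) for a constant C_B ≥ (1+ε)³, and let F = (U,V,W,S) = P_B(F₊). Then F is non-expansive with respect to the scaled distance, dist(F,F⋆) ≤ dist(F₊,F⋆), and F satisfies the incoherence condition max{√n1·‖U·Ŭᵀ‖_{2,∞}, √n2·‖V·V̆ᵀ‖_{2,∞}, √n3·‖W·W̆ᵀ‖_{2,∞}} ≤ B, where Ŭ, V̆, W̆ are formed from (U,V,W,S). -/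

import Mathlib

open Matrix MeasureTheory
open scoped Kronecker Classical BigOperators

namespace ScaledGD

noncomputable section

abbrev Tensor (n1 n2 n3 : ℕ) := Fin n1 → Fin n2 → Fin n3 → ℝ

/-- mode-1 matricization, columns indexed by (i3, i2) to match the Kronecker convention -/
def M1 {n1 n2 n3 : ℕ} (X : Tensor n1 n2 n3) : Matrix (Fin n1) (Fin n3 × Fin n2) ℝ :=
  Matrix.of fun i p => X i p.2 p.1

def M2 {n1 n2 n3 : ℕ} (X : Tensor n1 n2 n3) : Matrix (Fin n2) (Fin n3 × Fin n1) ℝ :=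
  Matrix.of fun i p => X p.2 i p.1

def M3 {n1 n2 n3 : ℕ} (X : Tensor n1 n2 n3) : Matrix (Fin n3) (Fin n2 × Fin n1) ℝ :=
  Matrix.of fun i p => X p.2 p.1 i

/-- Tucker product (A,B,C)·S -/
def tucker {m1 m2 m3 r1 r2 r3 : ℕ}
    (A : Matrix (Fin m1) (Fin r1) ℝ) (B : Matrix (Fin m2) (Fin r2) ℝ)
    (C : Matrix (Fin m3) (Fin r3) ℝ) (S : Tensor r1 r2 r3) : Tensor m1 m2 m3 :=
  fun i1 i2 i3 => ∑ j1, ∑ j2, ∑ j3, A i1 j1 * B i2 j2 * C i3 j3 * S j1 j2 j3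

/-- Frobenius norm of a matrix -/
def frob {m n : Type*} [Fintype m] [Fintype n] (A : Matrix m n ℝ) : ℝ :=
  Real.sqrt (∑ i, ∑ j, (A i j) ^ 2)

/-- Frobenius norm of a tensor -/
def frobT {n1 n2 n3 : ℕ} (X : Tensor n1 n2 n3) : ℝ :=
  Real.sqrt (∑ i1, ∑ i2, ∑ i3, (X i1 i2 i3) ^ 2)

def innerT {n1 n2 n3 : ℕ} (X Y : Tensor n1 n2 n3) : ℝ :=
  ∑ i1, ∑ i2, ∑ i3, X i1 i2 i3 * Y i1 i2 i3

def innerM {m n : Type*} [Fintype m] [Fintype n] (A B : Matrix m n ℝ) : ℝ :=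
  ∑ i, ∑ j, A i j * B i j

def rowNorm {m n : Type*} [Fintype n] (A : Matrix m n ℝ) (i : m) : ℝ :=
  Real.sqrt (∑ j, (A i j) ^ 2)

/-- ‖·‖_{2,∞}: largest ℓ2 norm of the rows -/
def norm2inf {m n : Type*} [Fintype m] [Fintype n] (A : Matrix m n ℝ) : ℝ :=
  ⨆ i, rowNorm A i

def vecNorm {n : Type*} [Fintype n] (x : n → ℝ) : ℝ :=
  Real.sqrt (∑ i, (x i) ^ 2)

/-- spectral norm -/
def opNorm {m n : Type*} [Fintype m] [Fintype n] (A : Matrix m n ℝ) : ℝ :=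
  sSup { c | ∃ x : n → ℝ, vecNorm x ≤ 1 ∧ c = vecNorm (A.mulVec x) }

/-- a factor quadruple -/
structure Quad (n1 n2 n3 r1 r2 r3 : ℕ) where
  U : Matrix (Fin n1) (Fin r1) ℝ
  V : Matrix (Fin n2) (Fin r2) ℝ
  W : Matrix (Fin n3) (Fin r3) ℝ
  S : Tensor r1 r2 r3

variable {n1 n2 n3 r1 r2 r3 : ℕ}

/-- the tensor (U,V,W)·S represented by a quadruple -/
def Quad.X (F : Quad n1 n2 n3 r1 r2 r3) : Tensor n1 n2 n3 := tucker F.U F.V F.W F.S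

def breveU (F : Quad n1 n2 n3 r1 r2 r3) : Matrix (Fin n3 × Fin n2) (Fin r1) ℝ :=
  (F.W ⊗ₖ F.V) * (M1 F.S)ᵀ

def breveV (F : Quad n1 n2 n3 r1 r2 r3) : Matrix (Fin n3 × Fin n1) (Fin r2) ℝ :=
  (F.W ⊗ₖ F.U) * (M2 F.S)ᵀ

def breveW (F : Quad n1 n2 n3 r1 r2 r3) : Matrix (Fin n2 × Fin n1) (Fin r3) ℝ :=
  (F.V ⊗ₖ F.U) * (M3 F.S)ᵀ


/-- a tangent-space style tensor (used in Lemma on tangent concentration) -/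
def tangentT (Fs : Quad n1 n2 n3 r1 r2 r3) (U' : Matrix (Fin n1) (Fin r1) ℝ)
    (V' : Matrix (Fin n2) (Fin r2) ℝ) (W' : Matrix (Fin n3) (Fin r3) ℝ)
    (S1 S2 S3 : Tensor r1 r2 r3) : Tensor n1 n2 n3 :=
  tucker U' Fs.V Fs.W S1 + tucker Fs.U V' Fs.W S2 + tucker Fs.U Fs.V W' S3

/-- squared scaled distance (infimum over invertible alignment matrices) -/
def distSq (σ1 : Fin r1 → ℝ) (σ2 : Fin r2 → ℝ) (σ3 : Fin r3 → ℝ)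
    (F Fs : Quad n1 n2 n3 r1 r2 r3) : ℝ :=
  sInf { d : ℝ | ∃ (Q1 : Matrix (Fin r1) (Fin r1) ℝ) (Q2 : Matrix (Fin r2) (Fin r2) ℝ)
      (Q3 : Matrix (Fin r3) (Fin r3) ℝ), IsUnit Q1.det ∧ IsUnit Q2.det ∧ IsUnit Q3.det ∧
      d = (frob ((F.U * Q1 - Fs.U) * Matrix.diagonal σ1)) ^ 2
        + (frob ((F.V * Q2 - Fs.V) * Matrix.diagonal σ2)) ^ 2
        + (frob ((F.W * Q3 - Fs.W) * Matrix.diagonal σ3)) ^ 2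
        + (frobT (tucker Q1⁻¹ Q2⁻¹ Q3⁻¹ F.S - Fs.S)) ^ 2 }

def dist (σ1 : Fin r1 → ℝ) (σ2 : Fin r2 → ℝ) (σ3 : Fin r3 → ℝ)
    (F Fs : Quad n1 n2 n3 r1 r2 r3) : ℝ :=
  Real.sqrt (distSq σ1 σ2 σ3 F Fs)

def firstVal {r : ℕ} (σ : Fin r → ℝ) : ℝ := if h : 0 < r then σ ⟨0, h⟩ else 0

def lastVal {r : ℕ} (σ : Fin r → ℝ) : ℝ := if h : 0 < r then σ ⟨r - 1, by omega⟩ else 0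

def sigmaMax (σ1 : Fin r1 → ℝ) (σ2 : Fin r2 → ℝ) (σ3 : Fin r3 → ℝ) : ℝ :=
  max (firstVal σ1) (max (firstVal σ2) (firstVal σ3))

def sigmaMin (σ1 : Fin r1 → ℝ) (σ2 : Fin r2 → ℝ) (σ3 : Fin r3 → ℝ) : ℝ :=
  min (lastVal σ1) (min (lastVal σ2) (lastVal σ3))

def kappa (σ1 : Fin r1 → ℝ) (σ2 : Fin r2 → ℝ) (σ3 : Fin r3 → ℝ) : ℝ :=
  sigmaMax σ1 σ2 σ3 / sigmaMin σ1 σ2 σ3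

def nmax (n1 n2 n3 : ℕ) : ℕ := max n1 (max n2 n3)

/-- the ground truth structural assumptions: orthonormal factors, and the core tensor
matricizations have Gram matrix `Σ⋆ₖ²` where the `σk` are positive and decreasing
(i.e. they are the nonzero singular values of `M_k(X⋆)` in decreasing order). -/
def GroundTruth (σ1 : Fin r1 → ℝ) (σ2 : Fin r2 → ℝ) (σ3 : Fin r3 → ℝ)
    (Fs : Quad n1 n2 n3 r1 r2 r3) : Prop :=
  (Fs.U)ᵀ * Fs.U = 1 ∧ (Fs.V)ᵀ * Fs.V = 1 ∧ (Fs.W)ᵀ * Fs.W = 1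
  ∧ M1 Fs.S * (M1 Fs.S)ᵀ = Matrix.diagonal (fun i => (σ1 i) ^ 2)
  ∧ M2 Fs.S * (M2 Fs.S)ᵀ = Matrix.diagonal (fun i => (σ2 i) ^ 2)
  ∧ M3 Fs.S * (M3 Fs.S)ᵀ = Matrix.diagonal (fun i => (σ3 i) ^ 2)
  ∧ (∀ i, 0 < σ1 i) ∧ (∀ i, 0 < σ2 i) ∧ (∀ i, 0 < σ3 i)
  ∧ (∀ i j : Fin r1, i ≤ j → σ1 j ≤ σ1 i)
  ∧ (∀ i j : Fin r2, i ≤ j → σ2 j ≤ σ2 i)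
  ∧ (∀ i j : Fin r3, i ≤ j → σ3 j ≤ σ3 i)

/-- μ-incoherence of the ground truth -/
def Incoherent (μ : ℝ) (Fs : Quad n1 n2 n3 r1 r2 r3) : Prop :=
  (n1 : ℝ) / r1 * (norm2inf Fs.U) ^ 2 ≤ μ
  ∧ (n2 : ℝ) / r2 * (norm2inf Fs.V) ^ 2 ≤ μ
  ∧ (n3 : ℝ) / r3 * (norm2inf Fs.W) ^ 2 ≤ μ

/-- one scaled gradient step driven by the "error" tensor E -/
def gdStep (η : ℝ) (E : Tensor n1 n2 n3) (F : Quad n1 n2 n3 r1 r2 r3) :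
    Quad n1 n2 n3 r1 r2 r3 where
  U := F.U - η • (M1 E * breveU F * ((breveU F)ᵀ * breveU F)⁻¹)
  V := F.V - η • (M2 E * breveV F * ((breveV F)ᵀ * breveV F)⁻¹)
  W := F.W - η • (M3 E * breveW F * ((breveW F)ᵀ * breveW F)⁻¹)
  S := F.S - η • tucker (((F.U)ᵀ * F.U)⁻¹ * (F.U)ᵀ) (((F.V)ᵀ * F.V)⁻¹ * (F.V)ᵀ)
      (((F.W)ᵀ * F.W)⁻¹ * (F.W)ᵀ) E

/-- row rescaling factor `1 ∧ B/x` (with the degenerate case x = 0 giving factor 1) -/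
def scaleFac (B : ℝ) (n : ℕ) (x : ℝ) : ℝ :=
  if Real.sqrt n * x = 0 then 1 else min 1 (B / (Real.sqrt n * x))

/-- the scaled projection P_B -/
def scaledProj (B : ℝ) (F : Quad n1 n2 n3 r1 r2 r3) : Quad n1 n2 n3 r1 r2 r3 where
  U := Matrix.of fun i j => scaleFac B n1 (rowNorm (F.U * (breveU F)ᵀ) i) * F.U i j
  V := Matrix.of fun i j => scaleFac B n2 (rowNorm (F.V * (breveV F)ᵀ) i) * F.V i j
  W := Matrix.of fun i j => scaleFac B n3 (rowNorm (F.W * (breveW F)ᵀ) i) * F.W i j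
  S := F.S

def IncoherenceCond (B : ℝ) (F : Quad n1 n2 n3 r1 r2 r3) : Prop :=
  Real.sqrt n1 * norm2inf (F.U * (breveU F)ᵀ) ≤ B
  ∧ Real.sqrt n2 * norm2inf (F.V * (breveV F)ᵀ) ≤ B
  ∧ Real.sqrt n3 * norm2inf (F.W * (breveW F)ᵀ) ≤ B

/-- P_Ω : keep the observed entries, zero elsewhere -/
def sampleT (ω : Fin n1 × Fin n2 × Fin n3 → Bool) (X : Tensor n1 n2 n3) : Tensor n1 n2 n3 :=
  fun i1 i2 i3 => if ω (i1, i2, i3) then X i1 i2 i3 else 0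

/-- Bernoulli(p) distribution on Bool -/
def bernoulliBool (p : ℝ) : Measure Bool :=
  (Real.toNNReal p) • Measure.dirac true + (Real.toNNReal (1 - p)) • Measure.dirac false

instance (p : ℝ) : IsFiniteMeasure (bernoulliBool p) := by
  unfold bernoulliBool; infer_instance

/-- i.i.d. Bernoulli sampling of the indices -/
def berMeasure (n1 n2 n3 : ℕ) (p : ℝ) : Measure (Fin n1 × Fin n2 × Fin n3 → Bool) :=
  Measure.pi fun _ => bernoulliBool p

/-- zero out the diagonal of a square matrix -/
def offdiag {N : Type*} [DecidableEq N] (G : Matrix N N ℝ) : Matrix N N ℝ :=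
  Matrix.of fun i j => if i = j then 0 else G i j

/-- `U` consists of (some choice of) top-r eigenvectors of the symmetric matrix G:
orthonormal columns which are eigenvectors, such that any eigenvector orthogonal to
all columns of U has eigenvalue no larger than the eigenvalues of the columns. -/
def IsTopEigenvectors {N : Type*} [Fintype N] {r : ℕ} (G : Matrix N N ℝ)
    (U : Matrix N (Fin r) ℝ) : Prop :=
  Uᵀ * U = 1 ∧ ∃ μ : Fin r → ℝ,
    (∀ j, G.mulVec (fun i => U i j) = μ j • (fun i => U i j))
    ∧ ∀ (v : N → ℝ) (lam : ℝ), v ≠ 0 → G.mulVec v = lam • v →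
        (∀ j, ∑ i, v i * U i j = 0) → ∀ j, lam ≤ μ j

/-- spectral initialization (before projection) for tensor completion -/
def SpectralInitTC (p : ℝ) (Y : Tensor n1 n2 n3) (F : Quad n1 n2 n3 r1 r2 r3) : Prop :=
  IsTopEigenvectors (offdiag ((p ^ 2)⁻¹ • (M1 Y * (M1 Y)ᵀ))) F.U
  ∧ IsTopEigenvectors (offdiag ((p ^ 2)⁻¹ • (M2 Y * (M2 Y)ᵀ))) F.V
  ∧ IsTopEigenvectors (offdiag ((p ^ 2)⁻¹ • (M3 Y * (M3 Y)ᵀ))) F.W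
  ∧ F.S = p⁻¹ • tucker (F.U)ᵀ (F.V)ᵀ (F.W)ᵀ Y

/-- HOSVD with multilinear rank (r1,r2,r3) -/
def IsHOSVD (X : Tensor n1 n2 n3) (F : Quad n1 n2 n3 r1 r2 r3) : Prop :=
  IsTopEigenvectors (M1 X * (M1 X)ᵀ) F.U
  ∧ IsTopEigenvectors (M2 X * (M2 X)ᵀ) F.V
  ∧ IsTopEigenvectors (M3 X * (M3 X)ᵀ) F.W
  ∧ F.S = tucker (F.U)ᵀ (F.V)ᵀ (F.W)ᵀ X

/-- the measurement map A -/
def Amap {m : ℕ} (Ad : Fin m → Tensor n1 n2 n3) (X : Tensor n1 n2 n3) : Fin m → ℝ :=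
  fun i => innerT (Ad i) X

/-- the adjoint A* -/
def Aadj {m : ℕ} (Ad : Fin m → Tensor n1 n2 n3) (y : Fin m → ℝ) : Tensor n1 n2 n3 :=
  fun i1 i2 i3 => ∑ i, y i * Ad i i1 i2 i3

/-- Gaussian design: all entries of the m measurement tensors are i.i.d. N(0,1/m) -/
def gaussDesign (m n1 n2 n3 : ℕ) : Measure (Fin m → Tensor n1 n2 n3) :=
  Measure.pi fun _ => Measure.pi fun _ => Measure.pi fun _ => Measure.pi fun _ =>
    ProbabilityTheory.gaussianReal 0 (m : NNReal)⁻¹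

/-- tensor restricted isometry property -/
def TRIP {m : ℕ} (Ad : Fin m → Tensor n1 n2 n3) (r1' r2' r3' : ℕ) (δ : ℝ) : Prop :=
  ∀ X : Tensor n1 n2 n3, (M1 X).rank ≤ r1' → (M2 X).rank ≤ r2' → (M3 X).rank ≤ r3' →
    (1 - δ) * (frobT X) ^ 2 ≤ ∑ i, (innerT (Ad i) X) ^ 2
    ∧ ∑ i, (innerT (Ad i) X) ^ 2 ≤ (1 + δ) * (frobT X) ^ 2

/-- ε-closeness in the aligned sense -/
def alignedClose (σ1 : Fin r1 → ℝ) (σ2 : Fin r2 → ℝ) (σ3 : Fin r3 → ℝ)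
    (F Fs : Quad n1 n2 n3 r1 r2 r3) (ε : ℝ) : Prop :=
  (frob ((F.U - Fs.U) * Matrix.diagonal σ1)) ^ 2
  + (frob ((F.V - Fs.V) * Matrix.diagonal σ2)) ^ 2
  + (frob ((F.W - Fs.W) * Matrix.diagonal σ3)) ^ 2
  + (frobT (F.S - Fs.S)) ^ 2 ≤ ε ^ 2 * (sigmaMin σ1 σ2 σ3) ^ 2

/-- the alignment equations -/
def AlignEqs (σ1 : Fin r1 → ℝ) (σ2 : Fin r2 → ℝ) (σ3 : Fin r3 → ℝ)
    (F Fs : Quad n1 n2 n3 r1 r2 r3) : Prop :=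
  (F.U)ᵀ * (F.U - Fs.U) * (Matrix.diagonal σ1 * Matrix.diagonal σ1)
      = M1 (F.S - Fs.S) * (M1 F.S)ᵀ
  ∧ (F.V)ᵀ * (F.V - Fs.V) * (Matrix.diagonal σ2 * Matrix.diagonal σ2)
      = M2 (F.S - Fs.S) * (M2 F.S)ᵀ
  ∧ (F.W)ᵀ * (F.W - Fs.W) * (Matrix.diagonal σ3 * Matrix.diagonal σ3)
      = M3 (F.S - Fs.S) * (M3 F.S)ᵀ

/-- `(UᵀU)^{-1/2}`: inverse of the positive semidefinite square root of the Gram matrix -/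
def invSqrtGram {m r : ℕ} (U : Matrix (Fin m) (Fin r) ℝ) : Matrix (Fin r) (Fin r) ℝ :=
  if h : (Uᵀ * U).PosSemidef then
    ((h.1.eigenvectorUnitary : Matrix (Fin r) (Fin r) ℝ) *
      Matrix.diagonal ((↑) ∘ (Real.sqrt ∘ h.1.eigenvalues)) *
      (star h.1.eigenvectorUnitary : Matrix (Fin r) (Fin r) ℝ))⁻¹ else 1

end


noncomputable section Helpers


variable {ι κ' : Type*} [Fintype ι] [Fintype κ']

def sq2 (u : ι → ℝ) : ℝ := ∑ i, u i ^ 2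

lemma sq2_nonneg (u : ι → ℝ) : 0 ≤ sq2 u :=
  Finset.sum_nonneg fun _ _ => sq_nonneg _

def nrm (u : ι → ℝ) : ℝ := Real.sqrt (sq2 u)

lemma nrm_nonneg (u : ι → ℝ) : 0 ≤ nrm u := Real.sqrt_nonneg _

lemma nrm_sq (u : ι → ℝ) : nrm u ^ 2 = sq2 u := Real.sq_sqrt (sq2_nonneg u)

lemma nrm_le_of_sq2_le {u : ι → ℝ} {t : ℝ} (h : sq2 u ≤ t ^ 2) (ht : 0 ≤ t) :
    nrm u ≤ t := by
  have := Real.sqrt_le_sqrt h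
  rwa [Real.sqrt_sq ht] at this

lemma sq2_le_of_nrm_le {u : ι → ℝ} {t : ℝ} (h : nrm u ≤ t) : sq2 u ≤ t ^ 2 := by
  have h0 := nrm_nonneg u
  nlinarith [nrm_sq u]

lemma cauchy (u v : ι → ℝ) : (∑ i, u i * v i) ≤ nrm u * nrm v := by
  have h := Finset.sum_mul_sq_le_sq_mul_sq Finset.univ u v
  have h2 : (∑ i, u i * v i) ≤ |∑ i, u i * v i| := le_abs_self _
  have h3 : |∑ i, u i * v i| = Real.sqrt ((∑ i, u i * v i) ^ 2) := (Real.sqrt_sq_eq_abs _).symm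
  calc (∑ i, u i * v i) ≤ Real.sqrt ((∑ i, u i * v i) ^ 2) := by rw [← h3]; exact h2
    _ ≤ Real.sqrt (sq2 u * sq2 v) := Real.sqrt_le_sqrt h
    _ = nrm u * nrm v := by
        rw [nrm, nrm, ← Real.sqrt_mul (sq2_nonneg u)]

lemma nrm_add_le (u v : ι → ℝ) : nrm (fun i => u i + v i) ≤ nrm u + nrm v := by
  refine nrm_le_of_sq2_le ?_ (add_nonneg (nrm_nonneg u) (nrm_nonneg v))
  have hc := cauchy u v
  have h1 : sq2 (fun i => u i + v i) = sq2 u + 2 * (∑ i, u i * v i) + sq2 v := by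
    simp only [sq2, ← Finset.sum_add_distrib, Finset.mul_sum]
    exact Finset.sum_congr rfl fun i _ => by ring
  nlinarith [nrm_sq u, nrm_sq v, nrm_nonneg u, nrm_nonneg v]

def rmul {m n : Type*} [Fintype m] (y : m → ℝ) (M : Matrix m n ℝ) : n → ℝ :=
  fun j => ∑ i, y i * M i j

lemma rmul_assoc {m n p : Type*} [Fintype m] [Fintype n] (y : m → ℝ)
    (M : Matrix m n ℝ) (N : Matrix n p ℝ) :
    rmul (rmul y M) N = rmul y (M * N) := by
  funext j
  simp only [rmul, Matrix.mul_apply, Finset.sum_mul, Finset.mul_sum]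
  rw [Finset.sum_comm]
  exact Finset.sum_congr rfl fun i _ => Finset.sum_congr rfl fun k _ => by ring

lemma rmul_add {m n : Type*} [Fintype m] (y : m → ℝ) (M N : Matrix m n ℝ) :
    rmul y (M + N) = fun j => rmul y M j + rmul y N j := by
  funext j
  simp only [rmul, Matrix.add_apply, mul_add, Finset.sum_add_distrib]

lemma nrm_rmul_le_frob {m n : Type*} [Fintype m] [Fintype n] (y : m → ℝ)
    (M : Matrix m n ℝ) {t : ℝ} (h : ∑ i, ∑ j, M i j ^ 2 ≤ t ^ 2) (ht : 0 ≤ t) :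
    nrm (rmul y M) ≤ t * nrm y := by
  refine nrm_le_of_sq2_le ?_ (mul_nonneg ht (nrm_nonneg y))
  have key : sq2 (rmul y M) ≤ (∑ i, ∑ j, M i j ^ 2) * sq2 y := by
    have h1 : ∀ j, (∑ i, y i * M i j) ^ 2 ≤ sq2 y * ∑ i, M i j ^ 2 := fun j =>
      Finset.sum_mul_sq_le_sq_mul_sq Finset.univ y fun i => M i j
    calc sq2 (rmul y M) = ∑ j, (∑ i, y i * M i j) ^ 2 := rfl
      _ ≤ ∑ j, sq2 y * ∑ i, M i j ^ 2 := Finset.sum_le_sum fun j _ => h1 j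
      _ = (∑ i, ∑ j, M i j ^ 2) * sq2 y := by
          rw [← Finset.mul_sum, Finset.sum_comm, mul_comm]
  calc sq2 (rmul y M) ≤ (∑ i, ∑ j, M i j ^ 2) * sq2 y := key
    _ ≤ t ^ 2 * sq2 y := by
        have := sq2_nonneg y; nlinarith
    _ = (t * nrm y) ^ 2 := by rw [mul_pow, nrm_sq]

lemma sq2_rmul_diag {m p : Type*} [Fintype m] [DecidableEq m] [Fintype p]
    (y : m → ℝ) (M : Matrix m p ℝ) (d : m → ℝ)
    (h : M * Mᵀ = Matrix.diagonal d) :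
    sq2 (rmul y M) = ∑ i, y i ^ 2 * d i := by
  have e1 : ∀ j, (∑ i, y i * M i j) ^ 2 = ∑ i, ∑ k, y i * y k * (M i j * M k j) := by
    intro j
    rw [sq, Finset.sum_mul_sum]
    exact Finset.sum_congr rfl fun i _ => Finset.sum_congr rfl fun k _ => by ring
  have step1 : sq2 (rmul y M) = ∑ i, ∑ k, y i * y k * (M * Mᵀ) i k := by
    calc sq2 (rmul y M) = ∑ j, ∑ i, ∑ k, y i * y k * (M i j * M k j) :=
          Finset.sum_congr rfl fun j _ => e1 j
      _ = ∑ i, ∑ j, ∑ k, y i * y k * (M i j * M k j) := Finset.sum_comm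
      _ = ∑ i, ∑ k, ∑ j, y i * y k * (M i j * M k j) :=
          Finset.sum_congr rfl fun i _ => Finset.sum_comm
      _ = ∑ i, ∑ k, y i * y k * (M * Mᵀ) i k := by
          refine Finset.sum_congr rfl fun i _ => Finset.sum_congr rfl fun k _ => ?_
          rw [Matrix.mul_apply, Finset.mul_sum]
          exact Finset.sum_congr rfl fun j _ => by rw [Matrix.transpose_apply]
  rw [step1, h]
  refine Finset.sum_congr rfl fun i _ => ?_
  rw [Finset.sum_eq_single i]
  · rw [Matrix.diagonal_apply_eq]; ring
  · intro b _ hb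
    rw [Matrix.diagonal_apply_ne d (Ne.symm hb), mul_zero]
  · intro hi; exact absurd (Finset.mem_univ i) hi

lemma nrm_rmul_kron {m1 m2 k1 k2 : Type*} [Fintype m1] [Fintype m2] [Fintype k1] [Fintype k2]
    (M : Matrix m1 k1 ℝ) (N : Matrix m2 k2 ℝ) {s t : ℝ} (hs : 0 ≤ s) (ht : 0 ≤ t)
    (hM : ∀ z : m1 → ℝ, nrm (rmul z M) ≤ s * nrm z)
    (hN : ∀ z : m2 → ℝ, nrm (rmul z N) ≤ t * nrm z)
    (y : m1 × m2 → ℝ) :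
    nrm (rmul y (M ⊗ₖ N)) ≤ (s * t) * nrm y := by
  have hM' : ∀ z : m1 → ℝ, sq2 (rmul z M) ≤ s ^ 2 * sq2 z := by
    intro z
    have := sq2_le_of_nrm_le (hM z)
    calc sq2 (rmul z M) ≤ (s * nrm z) ^ 2 := this
      _ = s ^ 2 * sq2 z := by rw [mul_pow, nrm_sq]
  have hN' : ∀ z : m2 → ℝ, sq2 (rmul z N) ≤ t ^ 2 * sq2 z := by
    intro z
    have := sq2_le_of_nrm_le (hN z)
    calc sq2 (rmul z N) ≤ (t * nrm z) ^ 2 := this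
      _ = t ^ 2 * sq2 z := by rw [mul_pow, nrm_sq]
  refine nrm_le_of_sq2_le ?_ (mul_nonneg (mul_nonneg hs ht) (nrm_nonneg y))
  have e1 : ∀ (q1 : k1) (q2 : k2),
      rmul y (M ⊗ₖ N) (q1, q2)
        = rmul (fun p2 => rmul (fun p1 => y (p1, p2)) M q1) N q2 := by
    intro q1 q2
    simp only [rmul, Matrix.kroneckerMap_apply, Finset.sum_mul]
    rw [Fintype.sum_prod_type, Finset.sum_comm]
    exact Finset.sum_congr rfl fun p2 _ => Finset.sum_congr rfl fun p1 _ => by ring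
  have e2 : sq2 (rmul y (M ⊗ₖ N))
      = ∑ q1 : k1, ∑ q2 : k2,
          (rmul (fun p2 => rmul (fun p1 => y (p1, p2)) M q1) N q2) ^ 2 := by
    rw [sq2, Fintype.sum_prod_type]
    exact Finset.sum_congr rfl fun q1 _ => Finset.sum_congr rfl fun q2 _ => by rw [e1]
  have e3 : sq2 (rmul y (M ⊗ₖ N))
      ≤ t ^ 2 * ∑ q1 : k1, sq2 (fun p2 => rmul (fun p1 => y (p1, p2)) M q1) := by
    rw [e2, Finset.mul_sum]
    exact Finset.sum_le_sum fun q1 _ => hN' _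
  have e4 : ∑ q1 : k1, sq2 (fun p2 => rmul (fun p1 => y (p1, p2)) M q1)
      = ∑ p2 : m2, sq2 (rmul (fun p1 => y (p1, p2)) M) := by
    simp only [sq2]
    exact Finset.sum_comm
  have e5 : ∑ p2 : m2, sq2 (rmul (fun p1 => y (p1, p2)) M)
      ≤ s ^ 2 * sq2 y := by
    have : sq2 y = ∑ p2 : m2, sq2 (fun p1 => y (p1, p2)) := by
      rw [sq2, Fintype.sum_prod_type, Finset.sum_comm]
      rfl
    rw [this, Finset.mul_sum]
    exact Finset.sum_le_sum fun p2 _ => hM' _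
  have ht2 : (0:ℝ) ≤ t ^ 2 := sq_nonneg t
  calc sq2 (rmul y (M ⊗ₖ N))
      ≤ t ^ 2 * ∑ q1 : k1, sq2 (fun p2 => rmul (fun p1 => y (p1, p2)) M q1) := e3
    _ = t ^ 2 * ∑ p2 : m2, sq2 (rmul (fun p1 => y (p1, p2)) M) := by rw [e4]
    _ ≤ t ^ 2 * (s ^ 2 * sq2 y) := mul_le_mul_of_nonneg_left e5 ht2
    _ = (s * t * nrm y) ^ 2 := by rw [mul_pow, mul_pow, nrm_sq]; ring

lemma per_row {ι : Type*} [Fintype ι] (a b : ι → ℝ) (c τ A : ℝ)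
    (hc0 : 0 ≤ c) (hc1 : c ≤ 1)
    (hcase : c = 1 ∨ nrm b - c * nrm a ≤ τ)
    (hτ : 0 ≤ τ) (ha : nrm a ≤ A) :
    sq2 (fun j => c * a j - b j) ≤ sq2 (fun j => a j - b j) + 2 * A * τ := by
  have hA : 0 ≤ A := le_trans (nrm_nonneg a) ha
  rcases hcase with h1 | h2
  · subst h1
    simp only [one_mul]
    nlinarith [mul_nonneg hA hτ]
  · set na := nrm a with hna
    set nb := nrm b with hnb
    have hna0 : 0 ≤ na := nrm_nonneg a
    have hnb0 : 0 ≤ nb := nrm_nonneg b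
    set I : ℝ := ∑ j, a j * b j with hI
    have hIle : I ≤ na * nb := cauchy a b
    have expand1 : sq2 (fun j => c * a j - b j)
        = c ^ 2 * sq2 a - 2 * c * I + sq2 b := by
      simp only [sq2, hI, Finset.mul_sum, ← Finset.sum_add_distrib, ← Finset.sum_sub_distrib]
      exact Finset.sum_congr rfl fun j _ => by ring
    have expand2 : sq2 (fun j => a j - b j) = sq2 a - 2 * I + sq2 b := by
      simp only [sq2, hI, Finset.mul_sum, ← Finset.sum_add_distrib, ← Finset.sum_sub_distrib]
      exact Finset.sum_congr rfl fun j _ => by ring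
    set m : ℝ := max 0 (nb - c * na) with hm
    have hm0 : 0 ≤ m := le_max_left _ _
    have hm1 : nb - c * na ≤ m := le_max_right _ _
    have key : sq2 (fun j => c * a j - b j) ≤ sq2 (fun j => a j - b j) + 2 * na * m := by
      rw [expand1, expand2]
      have hsa : sq2 a = na ^ 2 := (nrm_sq a).symm
      have hsb : sq2 b = nb ^ 2 := (nrm_sq b).symm
      rw [hsa, hsb]
      nlinarith [mul_nonneg (sub_nonneg.2 hc1) (sub_nonneg.2 hIle),
        mul_nonneg (mul_nonneg (sub_nonneg.2 hc1) hna0) (sub_nonneg.2 hm1),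
        mul_nonneg (mul_nonneg hc0 hna0) hm0,
        sq_nonneg ((1 - c) * na)]
    have hmτ : m ≤ τ := by
      rcases max_cases 0 (nb - c * na) with ⟨h, _⟩ | ⟨h, _⟩
      · rw [hm]; rw [h]; exact hτ
      · rw [hm]; rw [h]; exact h2
    have : 2 * na * m ≤ 2 * A * τ := by nlinarith
    linarith

lemma shrink_bound (na nb x s κ1 B P Pb θ : ℝ)
    (hna : 0 ≤ na) (hx : x ≤ Pb * na) (hs : 1 ≤ s)
    (hb : s * nb ≤ κ1) (hκ : 0 < κ1) (hB : P * κ1 ≤ B)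
    (hBx : B < s * x)
    (hP : 1 ≤ P) (hPb : P ≤ Pb) (hPbP : Pb - P ≤ 19 * θ) (hθ : 0 ≤ θ) :
    nb - (B / (s * x)) * na ≤ 19 * κ1 * θ := by
  have hs0 : (0:ℝ) < s := lt_of_lt_of_le one_pos hs
  have hB0 : 0 < B := lt_of_lt_of_le (by nlinarith) hB
  have hsx : 0 < s * x := lt_trans hB0 hBx
  have hx0 : 0 < x := by nlinarith
  have hPb1 : 1 ≤ Pb := le_trans hP hPb
  have hna0 : 0 < na := by nlinarith
  have hD : (0:ℝ) < s * Pb := by positivity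
  -- step 1 : P*κ1/(s*Pb) ≤ (B/(s*x))*na
  have h1 : P * κ1 / (s * Pb) ≤ B / (s * x) * na := by
    have e : B / (s * x) * na = B * na / (s * x) := by ring
    rw [e]
    have hle : s * x ≤ s * Pb * na := by nlinarith
    have d1 : B * na / (s * Pb * na) ≤ B * na / (s * x) :=
      div_le_div_of_nonneg_left (by positivity) hsx hle
    have d2 : B * na / (s * Pb * na) = B / (s * Pb) :=
      mul_div_mul_right _ _ (ne_of_gt hna0)
    have d3 : P * κ1 / (s * Pb) ≤ B / (s * Pb) := by gcongr
    calc P * κ1 / (s * Pb) ≤ B / (s * Pb) := d3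
      _ = B * na / (s * Pb * na) := d2.symm
      _ ≤ B * na / (s * x) := d1
  have h2 : nb ≤ κ1 / s := (le_div_iff₀' hs0).2 hb
  have h4 : κ1 / s - P * κ1 / (s * Pb) ≤ 19 * κ1 * θ := by
    rw [div_sub_div _ _ (ne_of_gt hs0) (ne_of_gt hD), div_le_iff₀ (by positivity)]
    have F1 : 0 ≤ κ1 * s * (19 * θ - (Pb - P)) := by
      apply mul_nonneg (by positivity); linarith
    have F2 : 0 ≤ 19 * κ1 * θ * s * (s * Pb - 1) := by
      apply mul_nonneg (by positivity); nlinarith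
    nlinarith [F1, F2]
  linarith


-- matricization / tucker lemmas
variable {n1 n2 n3 r1 r2 r3 : ℕ}

lemma sum_comm3 {α β γ : Type*} [Fintype α] [Fintype β] [Fintype γ] (f : α → β → γ → ℝ) :
    ∑ c, ∑ b, ∑ a, f a b c = ∑ a, ∑ b, ∑ c, f a b c :=
  calc ∑ c, ∑ b, ∑ a, f a b c = ∑ b, ∑ c, ∑ a, f a b c := Finset.sum_comm
    _ = ∑ b, ∑ a, ∑ c, f a b c := Finset.sum_congr rfl fun _ _ => Finset.sum_comm
    _ = ∑ a, ∑ b, ∑ c, f a b c := Finset.sum_comm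

lemma M1_tucker {m1 m2 m3 : ℕ} (A : Matrix (Fin m1) (Fin r1) ℝ) (B : Matrix (Fin m2) (Fin r2) ℝ)
    (C : Matrix (Fin m3) (Fin r3) ℝ) (S : Tensor r1 r2 r3) :
    M1 (tucker A B C S) = A * M1 S * (C ⊗ₖ B)ᵀ := by
  ext i p
  obtain ⟨i3, i2⟩ := p
  simp only [M1, Matrix.of_apply, tucker, Matrix.mul_apply, Matrix.transpose_apply,
    Matrix.kroneckerMap_apply, Fintype.sum_prod_type]
  calc ∑ j1, ∑ j2, ∑ j3, A i j1 * B i2 j2 * C i3 j3 * S j1 j2 j3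
      = ∑ j3, ∑ j2, ∑ j1, A i j1 * B i2 j2 * C i3 j3 * S j1 j2 j3 :=
        (sum_comm3 fun j1 j2 j3 => A i j1 * B i2 j2 * C i3 j3 * S j1 j2 j3).symm
    _ = ∑ j3, ∑ j2, (∑ j1, A i j1 * S j1 j2 j3) * (C i3 j3 * B i2 j2) := by
        refine Finset.sum_congr rfl fun j3 _ => Finset.sum_congr rfl fun j2 _ => ?_
        rw [Finset.sum_mul]
        exact Finset.sum_congr rfl fun j1 _ => by ring

lemma M2_tucker {m1 m2 m3 : ℕ} (A : Matrix (Fin m1) (Fin r1) ℝ) (B : Matrix (Fin m2) (Fin r2) ℝ)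
    (C : Matrix (Fin m3) (Fin r3) ℝ) (S : Tensor r1 r2 r3) :
    M2 (tucker A B C S) = B * M2 S * (C ⊗ₖ A)ᵀ := by
  ext i p
  obtain ⟨i3, i1⟩ := p
  simp only [M2, Matrix.of_apply, tucker, Matrix.mul_apply, Matrix.transpose_apply,
    Matrix.kroneckerMap_apply, Fintype.sum_prod_type]
  calc ∑ j1, ∑ j2, ∑ j3, A i1 j1 * B i j2 * C i3 j3 * S j1 j2 j3
      = ∑ j1, ∑ j3, ∑ j2, A i1 j1 * B i j2 * C i3 j3 * S j1 j2 j3 :=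
        Finset.sum_congr rfl fun _ _ => Finset.sum_comm
    _ = ∑ j3, ∑ j1, ∑ j2, A i1 j1 * B i j2 * C i3 j3 * S j1 j2 j3 := Finset.sum_comm
    _ = ∑ j3, ∑ j1, (∑ j2, B i j2 * S j1 j2 j3) * (C i3 j3 * A i1 j1) := by
        refine Finset.sum_congr rfl fun j3 _ => Finset.sum_congr rfl fun j1 _ => ?_
        rw [Finset.sum_mul]
        exact Finset.sum_congr rfl fun j2 _ => by ring

lemma M3_tucker {m1 m2 m3 : ℕ} (A : Matrix (Fin m1) (Fin r1) ℝ) (B : Matrix (Fin m2) (Fin r2) ℝ)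
    (C : Matrix (Fin m3) (Fin r3) ℝ) (S : Tensor r1 r2 r3) :
    M3 (tucker A B C S) = C * M3 S * (B ⊗ₖ A)ᵀ := by
  ext i p
  obtain ⟨i2, i1⟩ := p
  simp only [M3, Matrix.of_apply, tucker, Matrix.mul_apply, Matrix.transpose_apply,
    Matrix.kroneckerMap_apply, Fintype.sum_prod_type]
  calc ∑ j1, ∑ j2, ∑ j3, A i1 j1 * B i2 j2 * C i j3 * S j1 j2 j3
      = ∑ j2, ∑ j1, ∑ j3, A i1 j1 * B i2 j2 * C i j3 * S j1 j2 j3 := Finset.sum_comm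
    _ = ∑ j2, ∑ j1, (∑ j3, C i j3 * S j1 j2 j3) * (B i2 j2 * A i1 j1) := by
        refine Finset.sum_congr rfl fun j2 _ => Finset.sum_congr rfl fun j1 _ => ?_
        rw [Finset.sum_mul]
        exact Finset.sum_congr rfl fun j3 _ => by ring

lemma M1_inj {T T' : Tensor n1 n2 n3} (h : M1 T = M1 T') : T = T' := by
  funext i1 i2 i3
  exact congrFun (congrFun h i1) (i3, i2)

lemma tucker_comp {m1 m2 m3 : ℕ} (A : Matrix (Fin m1) (Fin r1) ℝ) (B : Matrix (Fin m2) (Fin r2) ℝ)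
    (C : Matrix (Fin m3) (Fin r3) ℝ) (A' : Matrix (Fin r1) (Fin r1) ℝ)
    (B' : Matrix (Fin r2) (Fin r2) ℝ) (C' : Matrix (Fin r3) (Fin r3) ℝ) (S : Tensor r1 r2 r3) :
    tucker A B C (tucker A' B' C' S) = tucker (A * A') (B * B') (C * C') S := by
  apply M1_inj
  rw [M1_tucker, M1_tucker, M1_tucker, Matrix.mul_kronecker_mul, Matrix.transpose_mul]
  simp only [Matrix.mul_assoc]

lemma X_M1 (F : Quad n1 n2 n3 r1 r2 r3) : F.U * (breveU F)ᵀ = M1 (Quad.X F) := by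
  rw [Quad.X, M1_tucker, breveU, Matrix.transpose_mul, Matrix.transpose_transpose,
    Matrix.mul_assoc]

lemma X_M2 (F : Quad n1 n2 n3 r1 r2 r3) : F.V * (breveV F)ᵀ = M2 (Quad.X F) := by
  rw [Quad.X, M2_tucker, breveV, Matrix.transpose_mul, Matrix.transpose_transpose,
    Matrix.mul_assoc]

lemma X_M3 (F : Quad n1 n2 n3 r1 r2 r3) : F.W * (breveW F)ᵀ = M3 (Quad.X F) := by
  rw [Quad.X, M3_tucker, breveW, Matrix.transpose_mul, Matrix.transpose_transpose,
    Matrix.mul_assoc]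

lemma sum_sq_M1 (T : Tensor n1 n2 n3) :
    ∑ i, ∑ p, (M1 T) i p ^ 2 = ∑ i1, ∑ i2, ∑ i3, T i1 i2 i3 ^ 2 := by
  refine Finset.sum_congr rfl fun i1 _ => ?_
  rw [Fintype.sum_prod_type]
  exact Finset.sum_comm

lemma rowNorm_eq_nrm {m n : Type*} [Fintype n] (A : Matrix m n ℝ) (i : m) :
    rowNorm A i = nrm (fun j => A i j) := rfl

lemma rowNorm_nonneg' {m n : Type*} [Fintype n] (A : Matrix m n ℝ) (i : m) :
    0 ≤ rowNorm A i := Real.sqrt_nonneg _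

lemma rowNorm_mul {m n p : Type*} [Fintype n] [Fintype p] (A : Matrix m n ℝ)
    (M : Matrix n p ℝ) (i : m) :
    rowNorm (A * M) i = nrm (rmul (fun j => A i j) M) := by
  simp only [rowNorm, nrm, sq2, rmul, Matrix.mul_apply]

lemma rowNorm_le_norm2inf {m n : Type*} [Fintype m] [Fintype n] [Nonempty m]
    (A : Matrix m n ℝ) (i : m) : rowNorm A i ≤ norm2inf A :=
  le_ciSup (Set.Finite.bddAbove (Set.finite_range _)) i

lemma norm2inf_le {m n : Type*} [Fintype m] [Fintype n] [Nonempty m]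
    {A : Matrix m n ℝ} {B : ℝ} (h : ∀ i, rowNorm A i ≤ B) : norm2inf A ≤ B :=
  ciSup_le h

-- scaleFac lemmas
lemma scaleFac_nonneg {B x : ℝ} (hB : 0 ≤ B) (hx : 0 ≤ x) (n : ℕ) :
    0 ≤ scaleFac B n x := by
  rw [scaleFac]
  split_ifs with h
  · exact zero_le_one
  · have hpos : 0 < Real.sqrt n * x :=
      lt_of_le_of_ne (mul_nonneg (Real.sqrt_nonneg _) hx) (Ne.symm h)
    exact le_min zero_le_one (by positivity)

lemma scaleFac_le_one {B x : ℝ} (n : ℕ) : scaleFac B n x ≤ 1 := by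
  rw [scaleFac]
  split_ifs with h
  · exact le_refl 1
  · exact min_le_left _ _

lemma scaleFac_cases {B x : ℝ} (hB : 0 < B) (hx : 0 ≤ x) (n : ℕ) :
    scaleFac B n x = 1 ∨
      (B < Real.sqrt n * x ∧ scaleFac B n x = B / (Real.sqrt n * x)) := by
  rw [scaleFac]
  split_ifs with h
  · exact Or.inl rfl
  · have hpos : 0 < Real.sqrt n * x :=
      lt_of_le_of_ne (mul_nonneg (Real.sqrt_nonneg _) hx) (Ne.symm h)
    rcases le_or_gt 1 (B / (Real.sqrt n * x)) with h1 | h1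
    · exact Or.inl (min_eq_left h1)
    · refine Or.inr ⟨?_, min_eq_right h1.le⟩
      rw [div_lt_one hpos] at h1
      exact h1

lemma scaleFac_mul_le {B x : ℝ} (hB : 0 ≤ B) (hx : 0 ≤ x) (n : ℕ) :
    scaleFac B n x * (Real.sqrt n * x) ≤ B := by
  rw [scaleFac]
  split_ifs with h
  · rw [h, mul_zero]; exact hB
  · have hpos : 0 < Real.sqrt n * x :=
      lt_of_le_of_ne (mul_nonneg (Real.sqrt_nonneg _) hx) (Ne.symm h)
    calc min 1 (B / (Real.sqrt n * x)) * (Real.sqrt n * x)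
        ≤ B / (Real.sqrt n * x) * (Real.sqrt n * x) :=
          mul_le_mul_of_nonneg_right (min_le_right _ _) hpos.le
      _ = B := div_mul_cancel₀ _ (ne_of_gt hpos)

lemma le_of_sq_le_sq {x y : ℝ} (h : x ^ 2 ≤ y ^ 2) (hy : 0 ≤ y) : x ≤ y := by
  calc x ≤ |x| := le_abs_self x
    _ = Real.sqrt (x ^ 2) := (Real.sqrt_sq_eq_abs x).symm
    _ ≤ Real.sqrt (y ^ 2) := Real.sqrt_le_sqrt h
    _ = y := Real.sqrt_sq hy

lemma frob_sq_rows {m n : Type*} [Fintype m] [Fintype n] (A : Matrix m n ℝ) :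
    frob A ^ 2 = ∑ i, sq2 (fun j => A i j) :=
  Real.sq_sqrt (Finset.sum_nonneg fun _ _ => Finset.sum_nonneg fun _ _ => sq_nonneg _)

lemma frob_sub_diag {m r : ℕ} (A B : Matrix (Fin m) (Fin r) ℝ) (σ : Fin r → ℝ) :
    frob ((A - B) * Matrix.diagonal σ) ^ 2
      = ∑ i, sq2 (fun j => A i j * σ j - B i j * σ j) := by
  rw [frob_sq_rows]
  refine Finset.sum_congr rfl fun i _ => ?_
  unfold sq2
  refine Finset.sum_congr rfl fun j _ => ?_
  simp only [Matrix.mul_diagonal, Matrix.sub_apply]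
  ring

lemma frobT_sq {T : Tensor n1 n2 n3} :
    frobT T ^ 2 = ∑ i1, ∑ i2, ∑ i3, T i1 i2 i3 ^ 2 :=
  Real.sq_sqrt (Finset.sum_nonneg fun _ _ => Finset.sum_nonneg fun _ _ =>
    Finset.sum_nonneg fun _ _ => sq_nonneg _)

lemma factor_bound {n r : ℕ} (Ws Wb : Matrix (Fin n) (Fin r) ℝ) (σ : Fin r → ℝ) (σm ebar : ℝ)
    (horth : Wsᵀ * Ws = 1)
    (hfrob : ∑ i, ∑ j, ((Wb - Ws) i j * σ j) ^ 2 ≤ (ebar * σm) ^ 2)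
    (hσlo : ∀ j, σm ≤ σ j) (hσm : 0 < σm) (hebar : 0 ≤ ebar) :
    ∀ z : Fin r → ℝ, nrm (rmul z Wbᵀ) ≤ (1 + ebar) * nrm z := by
  intro z
  have hsplit : Wbᵀ = Wsᵀ + (Wb - Ws)ᵀ := by
    rw [← Matrix.transpose_add, add_sub_cancel]
  rw [hsplit, rmul_add]
  refine le_trans (nrm_add_le _ _) ?_
  have h1 : nrm (rmul z Wsᵀ) = nrm z := by
    unfold nrm
    congr 1
    rw [sq2_rmul_diag z Wsᵀ (fun _ => 1)
      (by rw [Matrix.transpose_transpose, horth, Matrix.diagonal_one])]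
    simp [sq2]
  have hfr : ∑ j, ∑ i, ((Wb - Ws)ᵀ j i) ^ 2 ≤ ebar ^ 2 := by
    have hA : σm ^ 2 * (∑ i, ∑ j, (Wb - Ws) i j ^ 2) ≤ (ebar * σm) ^ 2 := by
      refine le_trans ?_ hfrob
      rw [Finset.mul_sum]
      refine Finset.sum_le_sum fun i _ => ?_
      rw [Finset.mul_sum]
      refine Finset.sum_le_sum fun j _ => ?_
      have := hσlo j
      nlinarith [mul_nonneg (mul_nonneg (sq_nonneg ((Wb - Ws) i j)) (sub_nonneg.2 this))
        (by linarith : (0:ℝ) ≤ σ j + σm)]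
    have hswap : ∑ j, ∑ i, ((Wb - Ws)ᵀ j i) ^ 2 = ∑ i, ∑ j, (Wb - Ws) i j ^ 2 := by
      rw [Finset.sum_comm]
      rfl
    rw [hswap]
    have hq : σm ^ 2 * (∑ i, ∑ j, (Wb - Ws) i j ^ 2) ≤ σm ^ 2 * ebar ^ 2 := by nlinarith
    exact le_of_mul_le_mul_left hq (by positivity)
  have h2 : nrm (rmul z (Wb - Ws)ᵀ) ≤ ebar * nrm z := nrm_rmul_le_frob z _ hfr hebar
  rw [h1]
  nlinarith [nrm_nonneg z, h2]

lemma incoh_row {n r : ℕ} [Nonempty (Fin n)] (Us : Matrix (Fin n) (Fin r) ℝ)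
    (σ : Fin r → ℝ) (σM μ rr : ℝ) (i : Fin n)
    (hσhi : ∀ j, σ j ≤ σM) (hσ0 : ∀ j, 0 < σ j)
    (hin : (n : ℝ) / r * (norm2inf Us) ^ 2 ≤ μ)
    (hr : 0 < r) (hrr : (r : ℝ) ≤ rr) (hμ0 : 0 ≤ μ) :
    (n : ℝ) * sq2 (fun j => Us i j * σ j) ≤ μ * rr * σM ^ 2 := by
  have hσM0 : 0 ≤ σM := le_trans (hσ0 ⟨0, hr⟩).le (hσhi ⟨0, hr⟩)
  have h1 : sq2 (fun j => Us i j * σ j) ≤ σM ^ 2 * sq2 (fun j => Us i j) := by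
    unfold sq2
    rw [Finset.mul_sum]
    refine Finset.sum_le_sum fun j _ => ?_
    simp only []
    have h2 := hσhi j
    have h3 := (hσ0 j).le
    nlinarith [mul_nonneg (mul_nonneg (sq_nonneg (Us i j)) (sub_nonneg.2 h2))
      (by linarith : (0:ℝ) ≤ σM + σ j)]
  have h2 : sq2 (fun j => Us i j) = rowNorm Us i ^ 2 := (nrm_sq _).symm
  have h3 : rowNorm Us i ≤ norm2inf Us := rowNorm_le_norm2inf Us i
  have h4 : (n : ℝ) * (norm2inf Us) ^ 2 ≤ μ * r := by
    have hrpos : (0 : ℝ) < (r : ℝ) := by exact_mod_cast hr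
    rw [div_mul_eq_mul_div, div_le_iff₀ hrpos] at hin
    linarith
  have h0 : 0 ≤ rowNorm Us i := rowNorm_nonneg' Us i
  have hn0 : (0 : ℝ) ≤ (n : ℝ) := Nat.cast_nonneg n
  have h5 : sq2 (fun j => Us i j) ≤ (norm2inf Us) ^ 2 := by rw [h2]; nlinarith
  have c1 : (n : ℝ) * sq2 (fun j => Us i j * σ j)
      ≤ σM ^ 2 * ((n : ℝ) * sq2 (fun j => Us i j)) := by
    have := mul_le_mul_of_nonneg_left h1 hn0
    nlinarith [this]
  have c3 : (n : ℝ) * sq2 (fun j => Us i j) ≤ μ * rr := by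
    have := mul_le_mul_of_nonneg_left h5 hn0
    nlinarith [mul_le_mul_of_nonneg_left hrr hμ0]
  have c4 : σM ^ 2 * ((n : ℝ) * sq2 (fun j => Us i j)) ≤ σM ^ 2 * (μ * rr) :=
    mul_le_mul_of_nonneg_left c3 (sq_nonneg σM)
  nlinarith [c1, c4]

lemma one_le_n_norm2inf {n r : ℕ} [Nonempty (Fin n)] (U : Matrix (Fin n) (Fin r) ℝ)
    (hr : 0 < r) (horth : Uᵀ * U = 1) : 1 ≤ (n : ℝ) * (norm2inf U) ^ 2 := by
  set j0 : Fin r := ⟨0, hr⟩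
  have h1 : (1 : ℝ) = ∑ i, U i j0 ^ 2 := by
    have := congrFun (congrFun horth j0) j0
    simp only [Matrix.mul_apply, Matrix.transpose_apply, Matrix.one_apply_eq] at this
    rw [← this]
    exact Finset.sum_congr rfl fun i _ => (sq (U i j0)).symm ▸ by ring
  have h2 : ∀ i, U i j0 ^ 2 ≤ (norm2inf U) ^ 2 := by
    intro i
    have ha : U i j0 ^ 2 ≤ rowNorm U i ^ 2 := by
      rw [rowNorm_eq_nrm, nrm_sq]
      exact Finset.single_le_sum (f := fun j => U i j ^ 2) (fun _ _ => sq_nonneg _)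
        (Finset.mem_univ j0)
    have hb := rowNorm_le_norm2inf U i
    have h0 := rowNorm_nonneg' U i
    nlinarith
  calc (1 : ℝ) = ∑ i, U i j0 ^ 2 := h1
    _ ≤ ∑ _i : Fin n, (norm2inf U) ^ 2 := Finset.sum_le_sum fun i _ => h2 i
    _ = (n : ℝ) * (norm2inf U) ^ 2 := by
        rw [Finset.sum_const, Finset.card_univ, Fintype.card_fin, nsmul_eq_mul]

lemma X_scaledProj {n1 n2 n3 r1 r2 r3 : ℕ} (B : ℝ) (F : Quad n1 n2 n3 r1 r2 r3)
    (i1 : Fin n1) (i2 : Fin n2) (i3 : Fin n3) :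
    Quad.X (scaledProj B F) i1 i2 i3
      = scaleFac B n1 (rowNorm (F.U * (breveU F)ᵀ) i1)
        * scaleFac B n2 (rowNorm (F.V * (breveV F)ᵀ) i2)
        * scaleFac B n3 (rowNorm (F.W * (breveW F)ᵀ) i3) * Quad.X F i1 i2 i3 := by
  simp only [Quad.X, tucker, scaledProj, Matrix.of_apply, Finset.mul_sum]
  refine Finset.sum_congr rfl fun j1 _ => ?_
  refine Finset.sum_congr rfl fun j2 _ => ?_
  refine Finset.sum_congr rfl fun j3 _ => by ring

-- distSq helper lemmas
section DistSqHelpers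

variable {n1 n2 n3 r1 r2 r3 : ℕ} (σ1 : Fin r1 → ℝ) (σ2 : Fin r2 → ℝ) (σ3 : Fin r3 → ℝ)
  (F Fs : Quad n1 n2 n3 r1 r2 r3)

lemma distSq_set_nonempty :
    Set.Nonempty { d : ℝ | ∃ (Q1 : Matrix (Fin r1) (Fin r1) ℝ) (Q2 : Matrix (Fin r2) (Fin r2) ℝ)
      (Q3 : Matrix (Fin r3) (Fin r3) ℝ), IsUnit Q1.det ∧ IsUnit Q2.det ∧ IsUnit Q3.det ∧
      d = (frob ((F.U * Q1 - Fs.U) * Matrix.diagonal σ1)) ^ 2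
        + (frob ((F.V * Q2 - Fs.V) * Matrix.diagonal σ2)) ^ 2
        + (frob ((F.W * Q3 - Fs.W) * Matrix.diagonal σ3)) ^ 2
        + (frobT (tucker Q1⁻¹ Q2⁻¹ Q3⁻¹ F.S - Fs.S)) ^ 2 } := by
  refine ⟨_, ⟨1, 1, 1, ?_, ?_, ?_, rfl⟩⟩ <;> rw [Matrix.det_one] <;> exact isUnit_one

lemma distSq_set_bddBelow :
    BddBelow { d : ℝ | ∃ (Q1 : Matrix (Fin r1) (Fin r1) ℝ) (Q2 : Matrix (Fin r2) (Fin r2) ℝ)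
      (Q3 : Matrix (Fin r3) (Fin r3) ℝ), IsUnit Q1.det ∧ IsUnit Q2.det ∧ IsUnit Q3.det ∧
      d = (frob ((F.U * Q1 - Fs.U) * Matrix.diagonal σ1)) ^ 2
        + (frob ((F.V * Q2 - Fs.V) * Matrix.diagonal σ2)) ^ 2
        + (frob ((F.W * Q3 - Fs.W) * Matrix.diagonal σ3)) ^ 2
        + (frobT (tucker Q1⁻¹ Q2⁻¹ Q3⁻¹ F.S - Fs.S)) ^ 2 } := by
  refine ⟨0, ?_⟩
  rintro d ⟨Q1, Q2, Q3, _, _, _, rfl⟩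
  positivity

lemma distSq_nonneg : 0 ≤ distSq σ1 σ2 σ3 F Fs := by
  rw [distSq]
  refine le_csInf (distSq_set_nonempty σ1 σ2 σ3 F Fs) ?_
  rintro d ⟨Q1, Q2, Q3, _, _, _, rfl⟩
  positivity

lemma distSq_le (Q1 : Matrix (Fin r1) (Fin r1) ℝ) (Q2 : Matrix (Fin r2) (Fin r2) ℝ)
    (Q3 : Matrix (Fin r3) (Fin r3) ℝ) (h1 : IsUnit Q1.det) (h2 : IsUnit Q2.det)
    (h3 : IsUnit Q3.det) :
    distSq σ1 σ2 σ3 F Fs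
      ≤ (frob ((F.U * Q1 - Fs.U) * Matrix.diagonal σ1)) ^ 2
        + (frob ((F.V * Q2 - Fs.V) * Matrix.diagonal σ2)) ^ 2
        + (frob ((F.W * Q3 - Fs.W) * Matrix.diagonal σ3)) ^ 2
        + (frobT (tucker Q1⁻¹ Q2⁻¹ Q3⁻¹ F.S - Fs.S)) ^ 2 := by
  rw [distSq]
  exact csInf_le (distSq_set_bddBelow σ1 σ2 σ3 F Fs) ⟨Q1, Q2, Q3, h1, h2, h3, rfl⟩

lemma distSq_lt {dd : ℝ} (h : distSq σ1 σ2 σ3 F Fs < dd) :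
    ∃ (Q1 : Matrix (Fin r1) (Fin r1) ℝ) (Q2 : Matrix (Fin r2) (Fin r2) ℝ)
      (Q3 : Matrix (Fin r3) (Fin r3) ℝ), IsUnit Q1.det ∧ IsUnit Q2.det ∧ IsUnit Q3.det ∧
      (frob ((F.U * Q1 - Fs.U) * Matrix.diagonal σ1)) ^ 2
        + (frob ((F.V * Q2 - Fs.V) * Matrix.diagonal σ2)) ^ 2
        + (frob ((F.W * Q3 - Fs.W) * Matrix.diagonal σ3)) ^ 2
        + (frobT (tucker Q1⁻¹ Q2⁻¹ Q3⁻¹ F.S - Fs.S)) ^ 2 < dd := by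
  rw [distSq] at h
  obtain ⟨d, hd, hlt⟩ := exists_lt_of_csInf_lt (distSq_set_nonempty σ1 σ2 σ3 F Fs) h
  obtain ⟨Q1, Q2, Q3, h1, h2, h3, rfl⟩ := hd
  exact ⟨Q1, Q2, Q3, h1, h2, h3, hlt⟩

end DistSqHelpers

lemma mode_bound {n r : ℕ} {P Q : Type*} [Fintype P] [Fintype Q]
    (Ub Us : Matrix (Fin n) (Fin r) ℝ) (σ : Fin r → ℝ)
    (MS MΔ : Matrix (Fin r) P ℝ) (Kr : Matrix P Q ℝ)
    (σm κ1 Bv P1 Pb ebar θ : ℝ) (X c : Fin n → ℝ)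
    (hσlo : ∀ j, σm ≤ σ j) (hσm : 0 < σm)
    (hMS : MS * MSᵀ = Matrix.diagonal (fun j => σ j ^ 2))
    (hMΔ : ∑ j, ∑ p, MΔ j p ^ 2 ≤ (ebar * σm) ^ 2)
    (hKr : ∀ z : P → ℝ, nrm (rmul z Kr) ≤ (1 + ebar) ^ 2 * nrm z)
    (hrowsq : ∑ i, sq2 (fun j => Ub i j * σ j - Us i j * σ j) ≤ (ebar * σm) ^ 2)
    (hUs : ∀ i, (n : ℝ) * sq2 (fun j => Us i j * σ j) ≤ κ1 ^ 2)
    (hX : ∀ i, X i = nrm (rmul (fun j => Ub i j) ((MS + MΔ) * Kr)))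
    (hc : ∀ i, (0 ≤ c i ∧ c i ≤ 1) ∧
        (c i = 1 ∨ (Bv < Real.sqrt n * X i ∧ c i = Bv / (Real.sqrt n * X i))))
    (hebar0 : 0 ≤ ebar) (hebar2 : ebar ≤ 2)
    (hκ : 0 < κ1) (hB : P1 * κ1 ≤ Bv) (hP1 : 1 ≤ P1)
    (hPb : Pb = (1 + ebar) ^ 3) (hP1Pb : P1 ≤ Pb) (hPbP : Pb - P1 ≤ 19 * θ)
    (hθ : 0 ≤ θ) (hn : 1 ≤ (n : ℝ)) :
    ∑ i, sq2 (fun j => c i * (Ub i j * σ j) - Us i j * σ j)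
      ≤ (∑ i, sq2 (fun j => Ub i j * σ j - Us i j * σ j))
        + (n : ℝ) * (2 * (κ1 + 2 * σm) * (19 * κ1 * θ)) := by
  have hs1 : 1 ≤ Real.sqrt n := by
    rw [Real.one_le_sqrt]
    exact hn
  have hstep : ∀ i : Fin n,
      sq2 (fun j => c i * (Ub i j * σ j) - Us i j * σ j)
        ≤ sq2 (fun j => Ub i j * σ j - Us i j * σ j)
          + 2 * (κ1 + 2 * σm) * (19 * κ1 * θ) := by
    intro i
    set u : Fin r → ℝ := fun j => Ub i j with hu
    set a : Fin r → ℝ := fun j => Ub i j * σ j with ha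
    set b : Fin r → ℝ := fun j => Us i j * σ j with hb
    have hrow_i : sq2 (fun j => a j - b j) ≤ (ebar * σm) ^ 2 :=
      le_trans (Finset.single_le_sum
        (f := fun i => sq2 (fun j => Ub i j * σ j - Us i j * σ j))
        (fun i _ => sq2_nonneg _) (Finset.mem_univ i)) hrowsq
    have hba : nrm (rmul u MS) = nrm a := by
      unfold nrm
      congr 1
      rw [sq2_rmul_diag u MS _ hMS]
      unfold sq2
      exact Finset.sum_congr rfl fun j _ => by simp only [ha]; ring
    have hΔa : nrm (rmul u MΔ) ≤ ebar * σm * nrm u :=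
      nrm_rmul_le_frob u MΔ hMΔ (by positivity)
    have hua : σm * nrm u ≤ nrm a := by
      have h1 : (σm * nrm u) ^ 2 ≤ nrm a ^ 2 := by
        rw [mul_pow, nrm_sq, nrm_sq]
        unfold sq2
        rw [Finset.mul_sum]
        refine Finset.sum_le_sum fun j _ => ?_
        simp only [ha, hu]
        have := hσlo j
        nlinarith [mul_nonneg (mul_nonneg (sq_nonneg (Ub i j)) (sub_nonneg.2 this))
          (by linarith : (0:ℝ) ≤ σ j + σm)]
      exact le_of_sq_le_sq h1 (nrm_nonneg a)
    have hMsum : nrm (rmul u (MS + MΔ)) ≤ (1 + ebar) * nrm a := by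
      rw [rmul_add]
      refine le_trans (nrm_add_le _ _) ?_
      have h2 : ebar * σm * nrm u ≤ ebar * nrm a := by nlinarith [nrm_nonneg u]
      rw [hba]
      nlinarith [hΔa]
    have hx_le : X i ≤ Pb * nrm a := by
      rw [hX i, ← rmul_assoc]
      refine le_trans (hKr _) ?_
      have h1e : (0:ℝ) ≤ (1 + ebar) ^ 2 := sq_nonneg _
      calc (1 + ebar) ^ 2 * nrm (rmul u (MS + MΔ))
          ≤ (1 + ebar) ^ 2 * ((1 + ebar) * nrm a) :=
            mul_le_mul_of_nonneg_left hMsum h1e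
        _ = Pb * nrm a := by rw [hPb]; ring
    have hnb : Real.sqrt n * nrm b ≤ κ1 := by
      have h1 : (Real.sqrt n * nrm b) ^ 2 ≤ κ1 ^ 2 := by
        rw [mul_pow, nrm_sq, Real.sq_sqrt (by positivity : (0:ℝ) ≤ (n:ℝ))]
        exact hUs i
      exact le_of_sq_le_sq h1 hκ.le
    have hnale : nrm a ≤ κ1 + 2 * σm := by
      have h1 : nrm a ≤ nrm (fun j => a j - b j) + nrm b := by
        have h0 := nrm_add_le (fun j => a j - b j) b
        have he : nrm a = nrm (fun j => (a j - b j) + b j) := by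
          congr 1
          funext j
          ring
        rw [he]
        exact h0
      have h2 : nrm b ≤ κ1 := by nlinarith [nrm_nonneg b, hnb, hs1]
      have h3 : nrm (fun j => a j - b j) ≤ ebar * σm :=
        nrm_le_of_sq2_le hrow_i (by positivity)
      nlinarith [h1, h2, h3, hσm]
    obtain ⟨⟨hc0, hc1⟩, hcase⟩ := hc i
    refine per_row a b (c i) (19 * κ1 * θ) (κ1 + 2 * σm) hc0 hc1 ?_ (by positivity) hnale
    rcases hcase with h1 | ⟨h2, h3⟩
    · exact Or.inl h1
    · right
      rw [h3]
      exact shrink_bound (nrm a) (nrm b) (X i) (Real.sqrt n) κ1 Bv P1 Pb θ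
        (nrm_nonneg a) hx_le hs1 hnb hκ hB h2 hP1 hP1Pb hPbP hθ
  calc ∑ i, sq2 (fun j => c i * (Ub i j * σ j) - Us i j * σ j)
      ≤ ∑ i, (sq2 (fun j => Ub i j * σ j - Us i j * σ j)
          + 2 * (κ1 + 2 * σm) * (19 * κ1 * θ)) := Finset.sum_le_sum fun i _ => hstep i
    _ = (∑ i, sq2 (fun j => Ub i j * σ j - Us i j * σ j))
          + (n : ℝ) * (2 * (κ1 + 2 * σm) * (19 * κ1 * θ)) := by
        rw [Finset.sum_add_distrib, Finset.sum_const, Finset.card_univ, Fintype.card_fin,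
          nsmul_eq_mul]

lemma one_le_one_add_cube {x : ℝ} (hx : 0 ≤ x) : 1 ≤ (1 + x) ^ 3 := by
  nlinarith [sq_nonneg x, mul_nonneg hx (sq_nonneg x)]

lemma sq_prod_le_one {a b : ℝ} (ha0 : 0 ≤ a) (ha1 : a ≤ 1) (hb0 : 0 ≤ b) (hb1 : b ≤ 1) :
    (a * b) ^ 2 ≤ 1 := by
  have hab : a * b ≤ 1 := by nlinarith [mul_nonneg ha0 hb0]
  nlinarith [mul_nonneg ha0 hb0]

lemma sum_sq_M2 {n1 n2 n3 : ℕ} (T : Tensor n1 n2 n3) :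
    ∑ i, ∑ p, (M2 T) i p ^ 2 = ∑ i1, ∑ i2, ∑ i3, T i1 i2 i3 ^ 2 := by
  have h1 : ∑ i, ∑ p, (M2 T) i p ^ 2 = ∑ i2, ∑ i3, ∑ i1, T i1 i2 i3 ^ 2 := by
    refine Finset.sum_congr rfl fun i2 _ => ?_
    rw [Fintype.sum_prod_type]
    rfl
  rw [h1, sum_comm3 fun i1 i3 i2 => T i1 i2 i3 ^ 2]
  exact Finset.sum_congr rfl fun i1 _ => Finset.sum_comm

lemma sum_sq_M3 {n1 n2 n3 : ℕ} (T : Tensor n1 n2 n3) :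
    ∑ i, ∑ p, (M3 T) i p ^ 2 = ∑ i1, ∑ i2, ∑ i3, T i1 i2 i3 ^ 2 := by
  have h1 : ∑ i, ∑ p, (M3 T) i p ^ 2 = ∑ i3, ∑ i2, ∑ i1, T i1 i2 i3 ^ 2 := by
    refine Finset.sum_congr rfl fun i3 _ => ?_
    rw [Fintype.sum_prod_type]
    rfl
  rw [h1]
  exact sum_comm3 fun i1 i2 i3 => T i1 i2 i3 ^ 2

lemma scaledProj_U_mul {n1 n2 n3 r1 r2 r3 : ℕ} (B : ℝ) (F : Quad n1 n2 n3 r1 r2 r3)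
    (Q : Matrix (Fin r1) (Fin r1) ℝ) (i : Fin n1) (j : Fin r1) :
    ((scaledProj B F).U * Q) i j
      = scaleFac B n1 (rowNorm (F.U * (breveU F)ᵀ) i) * ((F.U * Q) i j) := by
  rw [Matrix.mul_apply, Matrix.mul_apply, Finset.mul_sum]
  refine Finset.sum_congr rfl fun k _ => ?_
  rw [show (scaledProj B F).U i k
      = scaleFac B n1 (rowNorm (F.U * (breveU F)ᵀ) i) * F.U i k from rfl]
  ring

lemma scaledProj_V_mul {n1 n2 n3 r1 r2 r3 : ℕ} (B : ℝ) (F : Quad n1 n2 n3 r1 r2 r3)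
    (Q : Matrix (Fin r2) (Fin r2) ℝ) (i : Fin n2) (j : Fin r2) :
    ((scaledProj B F).V * Q) i j
      = scaleFac B n2 (rowNorm (F.V * (breveV F)ᵀ) i) * ((F.V * Q) i j) := by
  rw [Matrix.mul_apply, Matrix.mul_apply, Finset.mul_sum]
  refine Finset.sum_congr rfl fun k _ => ?_
  rw [show (scaledProj B F).V i k
      = scaleFac B n2 (rowNorm (F.V * (breveV F)ᵀ) i) * F.V i k from rfl]
  ring

lemma scaledProj_W_mul {n1 n2 n3 r1 r2 r3 : ℕ} (B : ℝ) (F : Quad n1 n2 n3 r1 r2 r3)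
    (Q : Matrix (Fin r3) (Fin r3) ℝ) (i : Fin n3) (j : Fin r3) :
    ((scaledProj B F).W * Q) i j
      = scaleFac B n3 (rowNorm (F.W * (breveW F)ᵀ) i) * ((F.W * Q) i j) := by
  rw [Matrix.mul_apply, Matrix.mul_apply, Finset.mul_sum]
  refine Finset.sum_congr rfl fun k _ => ?_
  rw [show (scaledProj B F).W i k
      = scaleFac B n3 (rowNorm (F.W * (breveW F)ᵀ) i) * F.W i k from rfl]
  ring

lemma sqrt_le_add {v a d : ℝ} (hv : 0 ≤ v) (ha : 0 ≤ a) (hd : 0 ≤ d)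
    (h : v ≤ a ^ 2 + d ^ 2) : Real.sqrt v ≤ a + d := by
  refine le_of_sq_le_sq ?_ (by linarith)
  rw [Real.sq_sqrt hv]
  nlinarith [mul_nonneg ha hd]

lemma cube_diff_le {e eb t : ℝ} (he0 : 0 ≤ e) (he1 : e ≤ 1) (ht0 : 0 ≤ t) (ht1 : t ≤ 1)
    (heb : eb ≤ e + t) (heb0 : 0 ≤ eb) : (1 + eb) ^ 3 - (1 + e) ^ 3 ≤ 19 * t := by
  have h1 : (1 + eb) ^ 3 ≤ (1 + e + t) ^ 3 := pow_le_pow_left₀ (by linarith) (by linarith) 3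
  nlinarith [mul_nonneg ht0 ht0, mul_nonneg (mul_nonneg ht0 ht0) ht0,
    mul_nonneg he0 ht0, mul_nonneg (mul_nonneg he0 he0) ht0,
    mul_nonneg (mul_nonneg he0 ht0) ht0, sq_nonneg (e - 1), sq_nonneg (t - 1),
    mul_nonneg (mul_nonneg ht0 ht0) (sub_nonneg.2 ht1),
    mul_nonneg (mul_nonneg he0 ht0) (sub_nonneg.2 ht1),
    mul_nonneg (mul_nonneg ht0 (sub_nonneg.2 he1)) ht0,
    mul_nonneg (mul_nonneg ht0 (sub_nonneg.2 he1)) (sub_nonneg.2 ht1)]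

end Helpers


set_option maxHeartbeats 2000000 in
/-- properties of the scaled projection (Lemma 2). -/
theorem scaled_projection_properties
    (n1 n2 n3 r1 r2 r3 : ℕ) (hn1 : 0 < n1) (hn2 : 0 < n2) (hn3 : 0 < n3)
    (hr1 : 0 < r1) (hr2 : 0 < r2) (hr3 : 0 < r3)
    (σ1 : Fin r1 → ℝ) (σ2 : Fin r2 → ℝ) (σ3 : Fin r3 → ℝ)
    (Fs : Quad n1 n2 n3 r1 r2 r3) (hGT : GroundTruth σ1 σ2 σ3 Fs)
    (μ : ℝ) (hμ : Incoherent μ Fs)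
    (ε : ℝ) (hε : ε < 1)
    (Fp : Quad n1 n2 n3 r1 r2 r3)
    (hdist : dist σ1 σ2 σ3 Fp Fs ≤ ε * sigmaMin σ1 σ2 σ3)
    (C_B : ℝ) (hCB : C_B ≥ (1 + ε) ^ 3) :
    dist σ1 σ2 σ3
        (scaledProj (C_B * Real.sqrt (μ * ((nmax r1 r2 r3 : ℕ) : ℝ)) * sigmaMax σ1 σ2 σ3) Fp)
        Fs ≤ dist σ1 σ2 σ3 Fp Fs
    ∧ IncoherenceCond (C_B * Real.sqrt (μ * ((nmax r1 r2 r3 : ℕ) : ℝ)) * sigmaMax σ1 σ2 σ3)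
        (scaledProj (C_B * Real.sqrt (μ * ((nmax r1 r2 r3 : ℕ) : ℝ)) * sigmaMax σ1 σ2 σ3) Fp) := by
  classical
  haveI : Nonempty (Fin n1) := ⟨⟨0, hn1⟩⟩
  haveI : Nonempty (Fin n2) := ⟨⟨0, hn2⟩⟩
  haveI : Nonempty (Fin n3) := ⟨⟨0, hn3⟩⟩
  obtain ⟨hUo, hVo, hWo, hS1, hS2, hS3, hσ1p, hσ2p, hσ3p, hσ1m, hσ2m, hσ3m⟩ := hGT
  obtain ⟨hμ1, hμ2, hμ3⟩ := hμ
  set σM := sigmaMax σ1 σ2 σ3 with hσMdef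
  set σm := sigmaMin σ1 σ2 σ3 with hσmdef
  set rbar : ℝ := ((nmax r1 r2 r3 : ℕ) : ℝ) with hrbardef
  have hfv1 : firstVal σ1 = σ1 ⟨0, hr1⟩ := by unfold firstVal; rw [dif_pos hr1]
  have hfv2 : firstVal σ2 = σ2 ⟨0, hr2⟩ := by unfold firstVal; rw [dif_pos hr2]
  have hfv3 : firstVal σ3 = σ3 ⟨0, hr3⟩ := by unfold firstVal; rw [dif_pos hr3]
  have hlv1 : lastVal σ1 = σ1 ⟨r1 - 1, by omega⟩ := by unfold lastVal; rw [dif_pos hr1]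
  have hlv2 : lastVal σ2 = σ2 ⟨r2 - 1, by omega⟩ := by unfold lastVal; rw [dif_pos hr2]
  have hlv3 : lastVal σ3 = σ3 ⟨r3 - 1, by omega⟩ := by unfold lastVal; rw [dif_pos hr3]
  have hσ1le : ∀ j, σ1 j ≤ σM := by
    intro j
    have h1 : σ1 j ≤ σ1 ⟨0, hr1⟩ := hσ1m ⟨0, hr1⟩ j (by rw [Fin.le_def]; exact Nat.zero_le _)
    have h2 : firstVal σ1 ≤ σM := by rw [hσMdef]; unfold sigmaMax; exact le_max_left _ _
    rw [hfv1] at h2; linarith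
  have hσ2le : ∀ j, σ2 j ≤ σM := by
    intro j
    have h1 : σ2 j ≤ σ2 ⟨0, hr2⟩ := hσ2m ⟨0, hr2⟩ j (by rw [Fin.le_def]; exact Nat.zero_le _)
    have h2 : firstVal σ2 ≤ σM := by
      rw [hσMdef]; unfold sigmaMax; exact le_trans (le_max_left _ _) (le_max_right _ _)
    rw [hfv2] at h2; linarith
  have hσ3le : ∀ j, σ3 j ≤ σM := by
    intro j
    have h1 : σ3 j ≤ σ3 ⟨0, hr3⟩ := hσ3m ⟨0, hr3⟩ j (by rw [Fin.le_def]; exact Nat.zero_le _)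
    have h2 : firstVal σ3 ≤ σM := by
      rw [hσMdef]; unfold sigmaMax; exact le_trans (le_max_right _ _) (le_max_right _ _)
    rw [hfv3] at h2; linarith
  have hσ1ge : ∀ j, σm ≤ σ1 j := by
    intro j
    have h1 : σ1 ⟨r1 - 1, by omega⟩ ≤ σ1 j :=
      hσ1m j ⟨r1 - 1, by omega⟩ (by rw [Fin.le_def]; exact Nat.le_sub_one_of_lt j.isLt)
    have h2 : σm ≤ lastVal σ1 := by rw [hσmdef]; unfold sigmaMin; exact min_le_left _ _
    rw [hlv1] at h2; linarith
  have hσ2ge : ∀ j, σm ≤ σ2 j := by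
    intro j
    have h1 : σ2 ⟨r2 - 1, by omega⟩ ≤ σ2 j :=
      hσ2m j ⟨r2 - 1, by omega⟩ (by rw [Fin.le_def]; exact Nat.le_sub_one_of_lt j.isLt)
    have h2 : σm ≤ lastVal σ2 := by
      rw [hσmdef]; unfold sigmaMin; exact le_trans (min_le_right _ _) (min_le_left _ _)
    rw [hlv2] at h2; linarith
  have hσ3ge : ∀ j, σm ≤ σ3 j := by
    intro j
    have h1 : σ3 ⟨r3 - 1, by omega⟩ ≤ σ3 j :=
      hσ3m j ⟨r3 - 1, by omega⟩ (by rw [Fin.le_def]; exact Nat.le_sub_one_of_lt j.isLt)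
    have h2 : σm ≤ lastVal σ3 := by
      rw [hσmdef]; unfold sigmaMin; exact le_trans (min_le_right _ _) (min_le_right _ _)
    rw [hlv3] at h2; linarith
  have hσm_pos : 0 < σm := by
    rw [hσmdef]; unfold sigmaMin
    refine lt_min ?_ (lt_min ?_ ?_)
    · rw [hlv1]; exact hσ1p _
    · rw [hlv2]; exact hσ2p _
    · rw [hlv3]; exact hσ3p _
  have hσmM : σm ≤ σM := le_trans (hσ1ge ⟨0, hr1⟩) (hσ1le ⟨0, hr1⟩)
  have hσM_pos : 0 < σM := lt_of_lt_of_le hσm_pos hσmM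
  have hdist0 : 0 ≤ dist σ1 σ2 σ3 Fp Fs := Real.sqrt_nonneg _
  have hε0 : 0 ≤ ε := by
    by_contra hcon
    push_neg at hcon
    have hneg : ε * σm < 0 := mul_neg_of_neg_of_pos hcon hσm_pos
    linarith [le_trans hdist0 hdist]
  have hμ0 : 0 < μ := by
    have h1 := one_le_n_norm2inf Fs.U hr1 hUo
    have hr1pos : (0:ℝ) < (r1:ℝ) := by exact_mod_cast hr1
    have h2 : (1:ℝ) / r1 ≤ ((n1:ℝ) * norm2inf Fs.U ^ 2) / r1 := by gcongr
    have h3 : (0:ℝ) < 1 / (r1:ℝ) := by positivity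
    have h4 : ((n1:ℝ) * norm2inf Fs.U ^ 2) / r1 = (n1:ℝ) / r1 * norm2inf Fs.U ^ 2 := by ring
    linarith
  have hrb1 : (r1:ℝ) ≤ rbar := by
    rw [hrbardef]; exact_mod_cast Nat.le_max_left r1 _
  have hrb2 : (r2:ℝ) ≤ rbar := by
    rw [hrbardef]
    exact_mod_cast le_trans (Nat.le_max_left r2 r3) (Nat.le_max_right r1 _)
  have hrb3 : (r3:ℝ) ≤ rbar := by
    rw [hrbardef]
    exact_mod_cast le_trans (Nat.le_max_right r2 r3) (Nat.le_max_right r1 _)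
  have hrbar_pos : (0:ℝ) < rbar := by
    have : (0:ℝ) < (r1:ℝ) := by exact_mod_cast hr1
    linarith
  set κ1 : ℝ := Real.sqrt (μ * rbar) * σM with hκ1def
  have hκ1_pos : 0 < κ1 := mul_pos (Real.sqrt_pos.2 (by positivity)) hσM_pos
  have hκ1sq : κ1 ^ 2 = μ * rbar * σM ^ 2 := by
    rw [hκ1def, mul_pow, Real.sq_sqrt (by positivity)]
  have hCB1 : (1:ℝ) ≤ C_B := le_trans (one_le_one_add_cube hε0) hCB
  set Bv := C_B * Real.sqrt (μ * rbar) * σM with hBvdef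
  have hBveq : Bv = C_B * κ1 := by rw [hBvdef, hκ1def]; ring
  have hBv_pos : 0 < Bv := by
    rw [hBveq]
    exact mul_pos (lt_of_lt_of_le one_pos hCB1) hκ1_pos
  have hn1R : (1:ℝ) ≤ (n1:ℝ) := by exact_mod_cast hn1
  have hn2R : (1:ℝ) ≤ (n2:ℝ) := by exact_mod_cast hn2
  have hn3R : (1:ℝ) ≤ (n3:ℝ) := by exact_mod_cast hn3
  have hUs1 : ∀ i, (n1:ℝ) * sq2 (fun j => Fs.U i j * σ1 j) ≤ κ1 ^ 2 := by
    intro i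
    rw [hκ1sq]
    exact incoh_row Fs.U σ1 σM μ rbar i hσ1le hσ1p hμ1 hr1 hrb1 hμ0.le
  have hUs2 : ∀ i, (n2:ℝ) * sq2 (fun j => Fs.V i j * σ2 j) ≤ κ1 ^ 2 := by
    intro i
    rw [hκ1sq]
    exact incoh_row Fs.V σ2 σM μ rbar i hσ2le hσ2p hμ2 hr2 hrb2 hμ0.le
  have hUs3 : ∀ i, (n3:ℝ) * sq2 (fun j => Fs.W i j * σ3 j) ≤ κ1 ^ 2 := by
    intro i
    rw [hκ1sq]
    exact incoh_row Fs.W σ3 σM μ rbar i hσ3le hσ3p hμ3 hr3 hrb3 hμ0.le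
  constructor
  · -- Part 1 : non-expansiveness
    unfold dist
    apply Real.sqrt_le_sqrt
    refine le_of_forall_pos_le_add fun η hη => ?_
    set K' : ℝ := 1 + ((n1:ℝ) + n2 + n3) * (2 * (κ1 + 2 * σm) * (19 * κ1)) / σm with hK'def
    have hK'1 : (1:ℝ) ≤ K' := by
      rw [hK'def]
      have h0 : 0 ≤ ((n1:ℝ) + n2 + n3) * (2 * (κ1 + 2 * σm) * (19 * κ1)) / σm := by positivity
      linarith
    have hK'0 : 0 < K' := lt_of_lt_of_le one_pos hK'1
    set δ := min (min 1 σm) (η / K') with hδdef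
    have hδ0 : 0 < δ := lt_min (lt_min one_pos hσm_pos) (div_pos hη hK'0)
    have hδ1 : δ ≤ 1 := le_trans (min_le_left _ _) (min_le_left _ _)
    have hδσm : δ ≤ σm := le_trans (min_le_left _ _) (min_le_right _ _)
    have hδη : δ * K' ≤ η := by
      have h1 : δ ≤ η / K' := min_le_right _ _
      calc δ * K' ≤ (η / K') * K' := mul_le_mul_of_nonneg_right h1 hK'0.le
        _ = η := div_mul_cancel₀ _ (ne_of_gt hK'0)
    have hub : distSq σ1 σ2 σ3 Fp Fs ≤ (ε * σm) ^ 2 := by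
      have h1 : distSq σ1 σ2 σ3 Fp Fs = (dist σ1 σ2 σ3 Fp Fs) ^ 2 :=
        (Real.sq_sqrt (distSq_nonneg σ1 σ2 σ3 Fp Fs)).symm
      rw [h1]
      exact pow_le_pow_left₀ hdist0 hdist 2
    have hlt : distSq σ1 σ2 σ3 Fp Fs < distSq σ1 σ2 σ3 Fp Fs + δ ^ 2 := by
      have hδsq : 0 < δ ^ 2 := by positivity
      linarith
    obtain ⟨Q1, Q2, Q3, hd1, hd2, hd3, hvlt⟩ := distSq_lt σ1 σ2 σ3 Fp Fs hlt
    set tU := frob ((Fp.U * Q1 - Fs.U) * Matrix.diagonal σ1) ^ 2 with htU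
    set tV := frob ((Fp.V * Q2 - Fs.V) * Matrix.diagonal σ2) ^ 2 with htV
    set tW := frob ((Fp.W * Q3 - Fs.W) * Matrix.diagonal σ3) ^ 2 with htW
    set tS := frobT (tucker Q1⁻¹ Q2⁻¹ Q3⁻¹ Fp.S - Fs.S) ^ 2 with htS
    have htU0 : 0 ≤ tU := sq_nonneg _
    have htV0 : 0 ≤ tV := sq_nonneg _
    have htW0 : 0 ≤ tW := sq_nonneg _
    have htS0 : 0 ≤ tS := sq_nonneg _
    set v := tU + tV + tW + tS with hvdef
    have hv0 : 0 ≤ v := by rw [hvdef]; linarith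
    have hvle : v ≤ (ε * σm) ^ 2 + δ ^ 2 := by rw [hvdef]; linarith [hvlt, hub]
    set ebar := max ε (Real.sqrt v / σm) with hebardef
    have hebarε : ε ≤ ebar := le_max_left _ _
    have hebar0 : 0 ≤ ebar := le_trans hε0 hebarε
    have hvsq : v ≤ (ebar * σm) ^ 2 := by
      have h1 : Real.sqrt v / σm ≤ ebar := le_max_right _ _
      have h2 : Real.sqrt v ≤ ebar * σm := by
        rw [div_le_iff₀ hσm_pos] at h1
        linarith
      calc v = Real.sqrt v ^ 2 := (Real.sq_sqrt hv0).symm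
        _ ≤ (ebar * σm) ^ 2 := pow_le_pow_left₀ (Real.sqrt_nonneg v) h2 2
    set θ := δ / σm with hθdef
    have hθ0 : 0 < θ := div_pos hδ0 hσm_pos
    have hθ1 : θ ≤ 1 := (div_le_one hσm_pos).2 hδσm
    have hebarθ : ebar ≤ ε + θ := by
      rw [hebardef]
      refine max_le (by linarith) ?_
      have h1 : Real.sqrt v ≤ ε * σm + δ :=
        sqrt_le_add hv0 (mul_nonneg hε0 hσm_pos.le) hδ0.le hvle
      rw [div_le_iff₀ hσm_pos]
      calc Real.sqrt v ≤ ε * σm + δ := h1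
        _ = (ε + θ) * σm := by rw [hθdef]; field_simp
    have hebar2 : ebar ≤ 2 := by linarith [hε.le]
    set P1 := (1 + ε) ^ 3 with hP1def
    set Pb := (1 + ebar) ^ 3 with hPbdef
    have hP11 : 1 ≤ P1 := one_le_one_add_cube hε0
    have hP1Pb : P1 ≤ Pb := by
      rw [hP1def, hPbdef]
      exact pow_le_pow_left₀ (by linarith) (by linarith) 3
    have hPbP : Pb - P1 ≤ 19 * θ := by
      rw [hP1def, hPbdef]
      exact cube_diff_le hε0 hε.le hθ0.le hθ1 hebarθ hebar0
    have hCB' : P1 * κ1 ≤ Bv := by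
      rw [hBveq, hP1def]
      exact mul_le_mul_of_nonneg_right hCB hκ1_pos.le
    -- aligned quantities
    set Ub := Fp.U * Q1 with hUbdef
    set Vb := Fp.V * Q2 with hVbdef
    set Wb := Fp.W * Q3 with hWbdef
    set Sb := tucker Q1⁻¹ Q2⁻¹ Q3⁻¹ Fp.S with hSbdef
    set Fb : Quad n1 n2 n3 r1 r2 r3 := ⟨Ub, Vb, Wb, Sb⟩ with hFbdef
    have hXbar : Quad.X Fb = Quad.X Fp := by
      show tucker Ub Vb Wb Sb = tucker Fp.U Fp.V Fp.W Fp.S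
      rw [hUbdef, hVbdef, hWbdef, hSbdef, tucker_comp]
      rw [Matrix.mul_assoc, Matrix.mul_assoc, Matrix.mul_assoc,
        Matrix.mul_nonsing_inv _ hd1, Matrix.mul_nonsing_inv _ hd2,
        Matrix.mul_nonsing_inv _ hd3, Matrix.mul_one, Matrix.mul_one, Matrix.mul_one]
    have htUrows : tU = ∑ i, sq2 (fun j => Ub i j * σ1 j - Fs.U i j * σ1 j) := by
      rw [htU]
      exact frob_sub_diag Ub Fs.U σ1
    have htVrows : tV = ∑ i, sq2 (fun j => Vb i j * σ2 j - Fs.V i j * σ2 j) := by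
      rw [htV]
      exact frob_sub_diag Vb Fs.V σ2
    have htWrows : tW = ∑ i, sq2 (fun j => Wb i j * σ3 j - Fs.W i j * σ3 j) := by
      rw [htW]
      exact frob_sub_diag Wb Fs.W σ3
    -- factor bounds
    have hfacU : ∀ z, nrm (rmul z Ubᵀ) ≤ (1 + ebar) * nrm z := by
      refine factor_bound Fs.U Ub σ1 σm ebar hUo ?_ hσ1ge hσm_pos hebar0
      have h1 : ∑ i, ∑ j, ((Ub - Fs.U) i j * σ1 j) ^ 2 = tU := by
        rw [htU, frob_sq_rows]
        refine Finset.sum_congr rfl fun i _ => ?_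
        unfold sq2
        exact Finset.sum_congr rfl fun j _ => by simp only [Matrix.mul_diagonal]
      rw [h1]
      have := hvsq
      rw [hvdef] at this
      linarith
    have hfacV : ∀ z, nrm (rmul z Vbᵀ) ≤ (1 + ebar) * nrm z := by
      refine factor_bound Fs.V Vb σ2 σm ebar hVo ?_ hσ2ge hσm_pos hebar0
      have h1 : ∑ i, ∑ j, ((Vb - Fs.V) i j * σ2 j) ^ 2 = tV := by
        rw [htV, frob_sq_rows]
        refine Finset.sum_congr rfl fun i _ => ?_
        unfold sq2
        exact Finset.sum_congr rfl fun j _ => by simp only [Matrix.mul_diagonal]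
      rw [h1]
      have := hvsq
      rw [hvdef] at this
      linarith
    have hfacW : ∀ z, nrm (rmul z Wbᵀ) ≤ (1 + ebar) * nrm z := by
      refine factor_bound Fs.W Wb σ3 σm ebar hWo ?_ hσ3ge hσm_pos hebar0
      have h1 : ∑ i, ∑ j, ((Wb - Fs.W) i j * σ3 j) ^ 2 = tW := by
        rw [htW, frob_sq_rows]
        refine Finset.sum_congr rfl fun i _ => ?_
        unfold sq2
        exact Finset.sum_congr rfl fun j _ => by simp only [Matrix.mul_diagonal]
      rw [h1]
      have := hvsq
      rw [hvdef] at this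
      linarith
    have hkronWV : ∀ z, nrm (rmul z ((Wb ⊗ₖ Vb)ᵀ)) ≤ (1 + ebar) ^ 2 * nrm z := by
      intro z
      rw [← Matrix.kroneckerMap_transpose]
      calc nrm (rmul z (Wbᵀ ⊗ₖ Vbᵀ)) ≤ ((1 + ebar) * (1 + ebar)) * nrm z :=
            nrm_rmul_kron Wbᵀ Vbᵀ (by linarith) (by linarith) hfacW hfacV z
        _ = (1 + ebar) ^ 2 * nrm z := by ring
    have hkronWU : ∀ z, nrm (rmul z ((Wb ⊗ₖ Ub)ᵀ)) ≤ (1 + ebar) ^ 2 * nrm z := by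
      intro z
      rw [← Matrix.kroneckerMap_transpose]
      calc nrm (rmul z (Wbᵀ ⊗ₖ Ubᵀ)) ≤ ((1 + ebar) * (1 + ebar)) * nrm z :=
            nrm_rmul_kron Wbᵀ Ubᵀ (by linarith) (by linarith) hfacW hfacU z
        _ = (1 + ebar) ^ 2 * nrm z := by ring
    have hkronVU : ∀ z, nrm (rmul z ((Vb ⊗ₖ Ub)ᵀ)) ≤ (1 + ebar) ^ 2 * nrm z := by
      intro z
      rw [← Matrix.kroneckerMap_transpose]
      calc nrm (rmul z (Vbᵀ ⊗ₖ Ubᵀ)) ≤ ((1 + ebar) * (1 + ebar)) * nrm z :=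
            nrm_rmul_kron Vbᵀ Ubᵀ (by linarith) (by linarith) hfacV hfacU z
        _ = (1 + ebar) ^ 2 * nrm z := by ring
    -- core deviations
    have hSdiff : ∀ i1 i2 i3, (Sb - Fs.S) i1 i2 i3 = Sb i1 i2 i3 - Fs.S i1 i2 i3 :=
      fun _ _ _ => rfl
    have htSsum : tS = ∑ i1, ∑ i2, ∑ i3, (Sb i1 i2 i3 - Fs.S i1 i2 i3) ^ 2 := by
      rw [htS, frobT_sq]
      simp only [Pi.sub_apply]
    have htSv : tS ≤ (ebar * σm) ^ 2 := by
      have := hvsq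
      rw [hvdef] at this
      linarith
    -- mode 1 data
    have hMadd1 : M1 Fs.S + (M1 Sb - M1 Fs.S) = M1 Sb := by rw [add_sub_cancel]
    have hMΔsq1 : ∑ j, ∑ p, (M1 Sb - M1 Fs.S) j p ^ 2 ≤ (ebar * σm) ^ 2 := by
      have he : M1 Sb - M1 Fs.S = M1 (fun a b c => Sb a b c - Fs.S a b c) := by
        ext j p
        simp [M1, Matrix.sub_apply]
      rw [he, sum_sq_M1]
      rw [htSsum] at htSv
      exact htSv
    have hmat1 : Fp.U * (breveU Fp)ᵀ = Ub * ((M1 Fs.S + (M1 Sb - M1 Fs.S)) * (Wb ⊗ₖ Vb)ᵀ) := by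
      rw [hMadd1]
      calc Fp.U * (breveU Fp)ᵀ = M1 (Quad.X Fp) := X_M1 Fp
        _ = M1 (Quad.X Fb) := by rw [hXbar]
        _ = Fb.U * (breveU Fb)ᵀ := (X_M1 Fb).symm
        _ = Ub * (M1 Sb * (Wb ⊗ₖ Vb)ᵀ) := by
            rw [show breveU Fb = (Wb ⊗ₖ Vb) * (M1 Sb)ᵀ from rfl, Matrix.transpose_mul,
              Matrix.transpose_transpose]
    have hX1 : ∀ i, rowNorm (Fp.U * (breveU Fp)ᵀ) i
        = nrm (rmul (fun j => Ub i j) ((M1 Fs.S + (M1 Sb - M1 Fs.S)) * (Wb ⊗ₖ Vb)ᵀ)) := by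
      intro i
      rw [hmat1, rowNorm_mul]
    have hc1 : ∀ i, (0 ≤ scaleFac Bv n1 (rowNorm (Fp.U * (breveU Fp)ᵀ) i)
          ∧ scaleFac Bv n1 (rowNorm (Fp.U * (breveU Fp)ᵀ) i) ≤ 1)
        ∧ (scaleFac Bv n1 (rowNorm (Fp.U * (breveU Fp)ᵀ) i) = 1
          ∨ (Bv < Real.sqrt n1 * rowNorm (Fp.U * (breveU Fp)ᵀ) i
            ∧ scaleFac Bv n1 (rowNorm (Fp.U * (breveU Fp)ᵀ) i)
              = Bv / (Real.sqrt n1 * rowNorm (Fp.U * (breveU Fp)ᵀ) i))) := by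
      intro i
      have hx0 : 0 ≤ rowNorm (Fp.U * (breveU Fp)ᵀ) i := rowNorm_nonneg' _ _
      exact ⟨⟨scaleFac_nonneg hBv_pos.le hx0 n1, scaleFac_le_one n1⟩,
        scaleFac_cases hBv_pos hx0 n1⟩
    have hmode1 := mode_bound Ub Fs.U σ1 (M1 Fs.S) (M1 Sb - M1 Fs.S) ((Wb ⊗ₖ Vb)ᵀ)
      σm κ1 Bv P1 Pb ebar θ
      (fun i => rowNorm (Fp.U * (breveU Fp)ᵀ) i)
      (fun i => scaleFac Bv n1 (rowNorm (Fp.U * (breveU Fp)ᵀ) i))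
      hσ1ge hσm_pos hS1 hMΔsq1 hkronWV (by rw [← htUrows]; linarith [hvsq]) hUs1
      hX1 hc1 hebar0 hebar2 hκ1_pos hCB' hP11 hPbdef hP1Pb hPbP hθ0.le hn1R
    -- mode 2 data
    have hMadd2 : M2 Fs.S + (M2 Sb - M2 Fs.S) = M2 Sb := by rw [add_sub_cancel]
    have hMΔsq2 : ∑ j, ∑ p, (M2 Sb - M2 Fs.S) j p ^ 2 ≤ (ebar * σm) ^ 2 := by
      have he : M2 Sb - M2 Fs.S = M2 (fun a b c => Sb a b c - Fs.S a b c) := by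
        ext j p
        simp [M2, Matrix.sub_apply]
      rw [he, sum_sq_M2]
      rw [htSsum] at htSv
      exact htSv
    have hmat2 : Fp.V * (breveV Fp)ᵀ = Vb * ((M2 Fs.S + (M2 Sb - M2 Fs.S)) * (Wb ⊗ₖ Ub)ᵀ) := by
      rw [hMadd2]
      calc Fp.V * (breveV Fp)ᵀ = M2 (Quad.X Fp) := X_M2 Fp
        _ = M2 (Quad.X Fb) := by rw [hXbar]
        _ = Fb.V * (breveV Fb)ᵀ := (X_M2 Fb).symm
        _ = Vb * (M2 Sb * (Wb ⊗ₖ Ub)ᵀ) := by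
            rw [show breveV Fb = (Wb ⊗ₖ Ub) * (M2 Sb)ᵀ from rfl, Matrix.transpose_mul,
              Matrix.transpose_transpose]
    have hX2 : ∀ i, rowNorm (Fp.V * (breveV Fp)ᵀ) i
        = nrm (rmul (fun j => Vb i j) ((M2 Fs.S + (M2 Sb - M2 Fs.S)) * (Wb ⊗ₖ Ub)ᵀ)) := by
      intro i
      rw [hmat2, rowNorm_mul]
    have hc2 : ∀ i, (0 ≤ scaleFac Bv n2 (rowNorm (Fp.V * (breveV Fp)ᵀ) i)
          ∧ scaleFac Bv n2 (rowNorm (Fp.V * (breveV Fp)ᵀ) i) ≤ 1)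
        ∧ (scaleFac Bv n2 (rowNorm (Fp.V * (breveV Fp)ᵀ) i) = 1
          ∨ (Bv < Real.sqrt n2 * rowNorm (Fp.V * (breveV Fp)ᵀ) i
            ∧ scaleFac Bv n2 (rowNorm (Fp.V * (breveV Fp)ᵀ) i)
              = Bv / (Real.sqrt n2 * rowNorm (Fp.V * (breveV Fp)ᵀ) i))) := by
      intro i
      have hx0 : 0 ≤ rowNorm (Fp.V * (breveV Fp)ᵀ) i := rowNorm_nonneg' _ _
      exact ⟨⟨scaleFac_nonneg hBv_pos.le hx0 n2, scaleFac_le_one n2⟩,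
        scaleFac_cases hBv_pos hx0 n2⟩
    have hmode2 := mode_bound Vb Fs.V σ2 (M2 Fs.S) (M2 Sb - M2 Fs.S) ((Wb ⊗ₖ Ub)ᵀ)
      σm κ1 Bv P1 Pb ebar θ
      (fun i => rowNorm (Fp.V * (breveV Fp)ᵀ) i)
      (fun i => scaleFac Bv n2 (rowNorm (Fp.V * (breveV Fp)ᵀ) i))
      hσ2ge hσm_pos hS2 hMΔsq2 hkronWU (by rw [← htVrows]; linarith [hvsq]) hUs2
      hX2 hc2 hebar0 hebar2 hκ1_pos hCB' hP11 hPbdef hP1Pb hPbP hθ0.le hn2R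
    -- mode 3 data
    have hMadd3 : M3 Fs.S + (M3 Sb - M3 Fs.S) = M3 Sb := by rw [add_sub_cancel]
    have hMΔsq3 : ∑ j, ∑ p, (M3 Sb - M3 Fs.S) j p ^ 2 ≤ (ebar * σm) ^ 2 := by
      have he : M3 Sb - M3 Fs.S = M3 (fun a b c => Sb a b c - Fs.S a b c) := by
        ext j p
        simp [M3, Matrix.sub_apply]
      rw [he, sum_sq_M3]
      rw [htSsum] at htSv
      exact htSv
    have hmat3 : Fp.W * (breveW Fp)ᵀ = Wb * ((M3 Fs.S + (M3 Sb - M3 Fs.S)) * (Vb ⊗ₖ Ub)ᵀ) := by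
      rw [hMadd3]
      calc Fp.W * (breveW Fp)ᵀ = M3 (Quad.X Fp) := X_M3 Fp
        _ = M3 (Quad.X Fb) := by rw [hXbar]
        _ = Fb.W * (breveW Fb)ᵀ := (X_M3 Fb).symm
        _ = Wb * (M3 Sb * (Vb ⊗ₖ Ub)ᵀ) := by
            rw [show breveW Fb = (Vb ⊗ₖ Ub) * (M3 Sb)ᵀ from rfl, Matrix.transpose_mul,
              Matrix.transpose_transpose]
    have hX3 : ∀ i, rowNorm (Fp.W * (breveW Fp)ᵀ) i
        = nrm (rmul (fun j => Wb i j) ((M3 Fs.S + (M3 Sb - M3 Fs.S)) * (Vb ⊗ₖ Ub)ᵀ)) := by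
      intro i
      rw [hmat3, rowNorm_mul]
    have hc3 : ∀ i, (0 ≤ scaleFac Bv n3 (rowNorm (Fp.W * (breveW Fp)ᵀ) i)
          ∧ scaleFac Bv n3 (rowNorm (Fp.W * (breveW Fp)ᵀ) i) ≤ 1)
        ∧ (scaleFac Bv n3 (rowNorm (Fp.W * (breveW Fp)ᵀ) i) = 1
          ∨ (Bv < Real.sqrt n3 * rowNorm (Fp.W * (breveW Fp)ᵀ) i
            ∧ scaleFac Bv n3 (rowNorm (Fp.W * (breveW Fp)ᵀ) i)
              = Bv / (Real.sqrt n3 * rowNorm (Fp.W * (breveW Fp)ᵀ) i))) := by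
      intro i
      have hx0 : 0 ≤ rowNorm (Fp.W * (breveW Fp)ᵀ) i := rowNorm_nonneg' _ _
      exact ⟨⟨scaleFac_nonneg hBv_pos.le hx0 n3, scaleFac_le_one n3⟩,
        scaleFac_cases hBv_pos hx0 n3⟩
    have hmode3 := mode_bound Wb Fs.W σ3 (M3 Fs.S) (M3 Sb - M3 Fs.S) ((Vb ⊗ₖ Ub)ᵀ)
      σm κ1 Bv P1 Pb ebar θ
      (fun i => rowNorm (Fp.W * (breveW Fp)ᵀ) i)
      (fun i => scaleFac Bv n3 (rowNorm (Fp.W * (breveW Fp)ᵀ) i))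
      hσ3ge hσm_pos hS3 hMΔsq3 hkronVU (by rw [← htWrows]; linarith [hvsq]) hUs3
      hX3 hc3 hebar0 hebar2 hκ1_pos hCB' hP11 hPbdef hP1Pb hPbP hθ0.le hn3R
    -- value of the projected quadruple with the same alignment
    have hle := distSq_le σ1 σ2 σ3 (scaledProj Bv Fp) Fs Q1 Q2 Q3 hd1 hd2 hd3
    have hfU : frob (((scaledProj Bv Fp).U * Q1 - Fs.U) * Matrix.diagonal σ1) ^ 2
        = ∑ i, sq2 (fun j => scaleFac Bv n1 (rowNorm (Fp.U * (breveU Fp)ᵀ) i)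
            * (Ub i j * σ1 j) - Fs.U i j * σ1 j) := by
      rw [frob_sub_diag]
      refine Finset.sum_congr rfl fun i _ => ?_
      unfold sq2
      refine Finset.sum_congr rfl fun j _ => ?_
      simp only []
      rw [scaledProj_U_mul, ← hUbdef]
      ring
    have hfV : frob (((scaledProj Bv Fp).V * Q2 - Fs.V) * Matrix.diagonal σ2) ^ 2
        = ∑ i, sq2 (fun j => scaleFac Bv n2 (rowNorm (Fp.V * (breveV Fp)ᵀ) i)
            * (Vb i j * σ2 j) - Fs.V i j * σ2 j) := by
      rw [frob_sub_diag]
      refine Finset.sum_congr rfl fun i _ => ?_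
      unfold sq2
      refine Finset.sum_congr rfl fun j _ => ?_
      simp only []
      rw [scaledProj_V_mul, ← hVbdef]
      ring
    have hfW : frob (((scaledProj Bv Fp).W * Q3 - Fs.W) * Matrix.diagonal σ3) ^ 2
        = ∑ i, sq2 (fun j => scaleFac Bv n3 (rowNorm (Fp.W * (breveW Fp)ᵀ) i)
            * (Wb i j * σ3 j) - Fs.W i j * σ3 j) := by
      rw [frob_sub_diag]
      refine Finset.sum_congr rfl fun i _ => ?_
      unfold sq2
      refine Finset.sum_congr rfl fun j _ => ?_
      simp only []
      rw [scaledProj_W_mul, ← hWbdef]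
      ring
    have hfS : frobT (tucker Q1⁻¹ Q2⁻¹ Q3⁻¹ (scaledProj Bv Fp).S - Fs.S) ^ 2 = tS := by
      rw [htS, hSbdef]
      rfl
    rw [hfU, hfV, hfW, hfS] at hle
    have hprojval : distSq σ1 σ2 σ3 (scaledProj Bv Fp) Fs
        ≤ v + ((n1:ℝ) + n2 + n3) * (2 * (κ1 + 2 * σm) * (19 * κ1 * θ)) := by
      refine le_trans hle ?_
      rw [hvdef, htUrows, htVrows, htWrows]
      linarith [hmode1, hmode2, hmode3]
    have hRδ : ((n1:ℝ) + n2 + n3) * (2 * (κ1 + 2 * σm) * (19 * κ1 * θ))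
        = (((n1:ℝ) + n2 + n3) * (2 * (κ1 + 2 * σm) * (19 * κ1)) / σm) * δ := by
      rw [hθdef]
      field_simp
    have hfinal : distSq σ1 σ2 σ3 (scaledProj Bv Fp) Fs ≤ distSq σ1 σ2 σ3 Fp Fs + δ * K' := by
      have h1 : v < distSq σ1 σ2 σ3 Fp Fs + δ ^ 2 := by rw [hvdef]; exact hvlt
      rw [hK'def]
      have h2 : 0 ≤ ((n1:ℝ) + n2 + n3) * (2 * (κ1 + 2 * σm) * (19 * κ1)) / σm := by positivity
      have hδsq : δ ^ 2 ≤ δ := by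
        calc δ ^ 2 = δ * δ := sq δ
          _ ≤ δ * 1 := mul_le_mul_of_nonneg_left hδ1 hδ0.le
          _ = δ := mul_one δ
      linarith [hprojval, hRδ]
    linarith
  · -- Part 2 : incoherence condition
    have hXF := X_scaledProj Bv Fp
    refine ⟨?_, ?_, ?_⟩
    · -- mode 1
      rw [X_M1 (scaledProj Bv Fp)]
      have hs_pos : 0 < Real.sqrt n1 := Real.sqrt_pos.2 (by positivity)
      have hb : ∀ i, rowNorm (M1 (Quad.X (scaledProj Bv Fp))) i ≤ Bv / Real.sqrt n1 := by
        intro i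
        set x := rowNorm (Fp.U * (breveU Fp)ᵀ) i with hxdef
        have hx0 : 0 ≤ x := rowNorm_nonneg' _ _
        set cU := scaleFac Bv n1 x with hcUdef
        have hcU0 : 0 ≤ cU := scaleFac_nonneg hBv_pos.le hx0 n1
        have hx_eq : x = nrm (fun p => M1 (Quad.X Fp) i p) := by
          rw [hxdef, rowNorm_eq_nrm, X_M1 Fp]
        have hR : rowNorm (M1 (Quad.X (scaledProj Bv Fp))) i ≤ cU * x := by
          rw [rowNorm_eq_nrm]
          refine nrm_le_of_sq2_le ?_ (mul_nonneg hcU0 hx0)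
          have hstep : ∀ p : Fin n3 × Fin n2,
              (M1 (Quad.X (scaledProj Bv Fp)) i p) ^ 2
                ≤ (cU * M1 (Quad.X Fp) i p) ^ 2 := by
            intro p
            have he : M1 (Quad.X (scaledProj Bv Fp)) i p
                = cU * scaleFac Bv n2 (rowNorm (Fp.V * (breveV Fp)ᵀ) p.2)
                  * scaleFac Bv n3 (rowNorm (Fp.W * (breveW Fp)ᵀ) p.1)
                  * Quad.X Fp i p.2 p.1 := by
              show Quad.X (scaledProj Bv Fp) i p.2 p.1 = _
              rw [hXF i p.2 p.1, hcUdef, hxdef]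
            rw [he]
            set cV := scaleFac Bv n2 (rowNorm (Fp.V * (breveV Fp)ᵀ) p.2)
            set cW := scaleFac Bv n3 (rowNorm (Fp.W * (breveW Fp)ᵀ) p.1)
            have hcV0 : 0 ≤ cV := scaleFac_nonneg hBv_pos.le (rowNorm_nonneg' _ _) n2
            have hcV1 : cV ≤ 1 := scaleFac_le_one n2
            have hcW0 : 0 ≤ cW := scaleFac_nonneg hBv_pos.le (rowNorm_nonneg' _ _) n3
            have hcW1 : cW ≤ 1 := scaleFac_le_one n3
            have h3 : (cV * cW) ^ 2 ≤ 1 := sq_prod_le_one hcV0 hcV1 hcW0 hcW1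
            have he2 : M1 (Quad.X Fp) i p = Quad.X Fp i p.2 p.1 := rfl
            rw [he2]
            calc (cU * cV * cW * Quad.X Fp i p.2 p.1) ^ 2
                = (cU * Quad.X Fp i p.2 p.1) ^ 2 * (cV * cW) ^ 2 := by ring
              _ ≤ (cU * Quad.X Fp i p.2 p.1) ^ 2 * 1 :=
                  mul_le_mul_of_nonneg_left h3 (sq_nonneg _)
              _ = (cU * Quad.X Fp i p.2 p.1) ^ 2 := mul_one _
          calc sq2 (fun p => M1 (Quad.X (scaledProj Bv Fp)) i p)
              ≤ ∑ p, (cU * M1 (Quad.X Fp) i p) ^ 2 :=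
                Finset.sum_le_sum fun p _ => hstep p
            _ = cU ^ 2 * sq2 (fun p => M1 (Quad.X Fp) i p) := by
                rw [sq2, Finset.mul_sum]
                exact Finset.sum_congr rfl fun p _ => by ring
            _ = (cU * x) ^ 2 := by rw [hx_eq, ← nrm_sq]; ring
        rw [le_div_iff₀ hs_pos]
        calc rowNorm (M1 (Quad.X (scaledProj Bv Fp))) i * Real.sqrt n1
            ≤ (cU * x) * Real.sqrt n1 :=
              mul_le_mul_of_nonneg_right hR (Real.sqrt_nonneg _)
          _ = cU * (Real.sqrt n1 * x) := by ring
          _ ≤ Bv := scaleFac_mul_le hBv_pos.le hx0 n1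
      have h2 : norm2inf (M1 (Quad.X (scaledProj Bv Fp))) ≤ Bv / Real.sqrt n1 :=
        norm2inf_le hb
      calc Real.sqrt n1 * norm2inf (M1 (Quad.X (scaledProj Bv Fp)))
          ≤ Real.sqrt n1 * (Bv / Real.sqrt n1) :=
            mul_le_mul_of_nonneg_left h2 (Real.sqrt_nonneg _)
        _ = Bv := by field_simp
    · -- mode 2
      rw [X_M2 (scaledProj Bv Fp)]
      have hs_pos : 0 < Real.sqrt n2 := Real.sqrt_pos.2 (by positivity)
      have hb : ∀ i, rowNorm (M2 (Quad.X (scaledProj Bv Fp))) i ≤ Bv / Real.sqrt n2 := by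
        intro i
        set x := rowNorm (Fp.V * (breveV Fp)ᵀ) i with hxdef
        have hx0 : 0 ≤ x := rowNorm_nonneg' _ _
        set cV := scaleFac Bv n2 x with hcVdef
        have hcV0 : 0 ≤ cV := scaleFac_nonneg hBv_pos.le hx0 n2
        have hx_eq : x = nrm (fun p => M2 (Quad.X Fp) i p) := by
          rw [hxdef, rowNorm_eq_nrm, X_M2 Fp]
        have hR : rowNorm (M2 (Quad.X (scaledProj Bv Fp))) i ≤ cV * x := by
          rw [rowNorm_eq_nrm]
          refine nrm_le_of_sq2_le ?_ (mul_nonneg hcV0 hx0)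
          have hstep : ∀ p : Fin n3 × Fin n1,
              (M2 (Quad.X (scaledProj Bv Fp)) i p) ^ 2
                ≤ (cV * M2 (Quad.X Fp) i p) ^ 2 := by
            intro p
            have he : M2 (Quad.X (scaledProj Bv Fp)) i p
                = scaleFac Bv n1 (rowNorm (Fp.U * (breveU Fp)ᵀ) p.2) * cV
                  * scaleFac Bv n3 (rowNorm (Fp.W * (breveW Fp)ᵀ) p.1)
                  * Quad.X Fp p.2 i p.1 := by
              show Quad.X (scaledProj Bv Fp) p.2 i p.1 = _
              rw [hXF p.2 i p.1, hcVdef, hxdef]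
            rw [he]
            set cU := scaleFac Bv n1 (rowNorm (Fp.U * (breveU Fp)ᵀ) p.2)
            set cW := scaleFac Bv n3 (rowNorm (Fp.W * (breveW Fp)ᵀ) p.1)
            have hcU0 : 0 ≤ cU := scaleFac_nonneg hBv_pos.le (rowNorm_nonneg' _ _) n1
            have hcU1 : cU ≤ 1 := scaleFac_le_one n1
            have hcW0 : 0 ≤ cW := scaleFac_nonneg hBv_pos.le (rowNorm_nonneg' _ _) n3
            have hcW1 : cW ≤ 1 := scaleFac_le_one n3
            have h3 : (cU * cW) ^ 2 ≤ 1 := sq_prod_le_one hcU0 hcU1 hcW0 hcW1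
            have he2 : M2 (Quad.X Fp) i p = Quad.X Fp p.2 i p.1 := rfl
            rw [he2]
            calc (cU * cV * cW * Quad.X Fp p.2 i p.1) ^ 2
                = (cV * Quad.X Fp p.2 i p.1) ^ 2 * (cU * cW) ^ 2 := by ring
              _ ≤ (cV * Quad.X Fp p.2 i p.1) ^ 2 * 1 :=
                  mul_le_mul_of_nonneg_left h3 (sq_nonneg _)
              _ = (cV * Quad.X Fp p.2 i p.1) ^ 2 := mul_one _
          calc sq2 (fun p => M2 (Quad.X (scaledProj Bv Fp)) i p)
              ≤ ∑ p, (cV * M2 (Quad.X Fp) i p) ^ 2 :=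
                Finset.sum_le_sum fun p _ => hstep p
            _ = cV ^ 2 * sq2 (fun p => M2 (Quad.X Fp) i p) := by
                rw [sq2, Finset.mul_sum]
                exact Finset.sum_congr rfl fun p _ => by ring
            _ = (cV * x) ^ 2 := by rw [hx_eq, ← nrm_sq]; ring
        rw [le_div_iff₀ hs_pos]
        calc rowNorm (M2 (Quad.X (scaledProj Bv Fp))) i * Real.sqrt n2
            ≤ (cV * x) * Real.sqrt n2 :=
              mul_le_mul_of_nonneg_right hR (Real.sqrt_nonneg _)
          _ = cV * (Real.sqrt n2 * x) := by ring
          _ ≤ Bv := scaleFac_mul_le hBv_pos.le hx0 n2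
      have h2 : norm2inf (M2 (Quad.X (scaledProj Bv Fp))) ≤ Bv / Real.sqrt n2 :=
        norm2inf_le hb
      calc Real.sqrt n2 * norm2inf (M2 (Quad.X (scaledProj Bv Fp)))
          ≤ Real.sqrt n2 * (Bv / Real.sqrt n2) :=
            mul_le_mul_of_nonneg_left h2 (Real.sqrt_nonneg _)
        _ = Bv := by field_simp
    · -- mode 3
      rw [X_M3 (scaledProj Bv Fp)]
      have hs_pos : 0 < Real.sqrt n3 := Real.sqrt_pos.2 (by positivity)
      have hb : ∀ i, rowNorm (M3 (Quad.X (scaledProj Bv Fp))) i ≤ Bv / Real.sqrt n3 := by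
        intro i
        set x := rowNorm (Fp.W * (breveW Fp)ᵀ) i with hxdef
        have hx0 : 0 ≤ x := rowNorm_nonneg' _ _
        set cW := scaleFac Bv n3 x with hcWdef
        have hcW0 : 0 ≤ cW := scaleFac_nonneg hBv_pos.le hx0 n3
        have hx_eq : x = nrm (fun p => M3 (Quad.X Fp) i p) := by
          rw [hxdef, rowNorm_eq_nrm, X_M3 Fp]
        have hR : rowNorm (M3 (Quad.X (scaledProj Bv Fp))) i ≤ cW * x := by
          rw [rowNorm_eq_nrm]
          refine nrm_le_of_sq2_le ?_ (mul_nonneg hcW0 hx0)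
          have hstep : ∀ p : Fin n2 × Fin n1,
              (M3 (Quad.X (scaledProj Bv Fp)) i p) ^ 2
                ≤ (cW * M3 (Quad.X Fp) i p) ^ 2 := by
            intro p
            have he : M3 (Quad.X (scaledProj Bv Fp)) i p
                = scaleFac Bv n1 (rowNorm (Fp.U * (breveU Fp)ᵀ) p.2)
                  * scaleFac Bv n2 (rowNorm (Fp.V * (breveV Fp)ᵀ) p.1) * cW
                  * Quad.X Fp p.2 p.1 i := by
              show Quad.X (scaledProj Bv Fp) p.2 p.1 i = _
              rw [hXF p.2 p.1 i, hcWdef, hxdef]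
            rw [he]
            set cU := scaleFac Bv n1 (rowNorm (Fp.U * (breveU Fp)ᵀ) p.2)
            set cV := scaleFac Bv n2 (rowNorm (Fp.V * (breveV Fp)ᵀ) p.1)
            have hcU0 : 0 ≤ cU := scaleFac_nonneg hBv_pos.le (rowNorm_nonneg' _ _) n1
            have hcU1 : cU ≤ 1 := scaleFac_le_one n1
            have hcV0 : 0 ≤ cV := scaleFac_nonneg hBv_pos.le (rowNorm_nonneg' _ _) n2
            have hcV1 : cV ≤ 1 := scaleFac_le_one n2
            have h3 : (cU * cV) ^ 2 ≤ 1 := sq_prod_le_one hcU0 hcU1 hcV0 hcV1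
            have he2 : M3 (Quad.X Fp) i p = Quad.X Fp p.2 p.1 i := rfl
            rw [he2]
            calc (cU * cV * cW * Quad.X Fp p.2 p.1 i) ^ 2
                = (cW * Quad.X Fp p.2 p.1 i) ^ 2 * (cU * cV) ^ 2 := by ring
              _ ≤ (cW * Quad.X Fp p.2 p.1 i) ^ 2 * 1 :=
                  mul_le_mul_of_nonneg_left h3 (sq_nonneg _)
              _ = (cW * Quad.X Fp p.2 p.1 i) ^ 2 := mul_one _
          calc sq2 (fun p => M3 (Quad.X (scaledProj Bv Fp)) i p)
              ≤ ∑ p, (cW * M3 (Quad.X Fp) i p) ^ 2 :=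
                Finset.sum_le_sum fun p _ => hstep p
            _ = cW ^ 2 * sq2 (fun p => M3 (Quad.X Fp) i p) := by
                rw [sq2, Finset.mul_sum]
                exact Finset.sum_congr rfl fun p _ => by ring
            _ = (cW * x) ^ 2 := by rw [hx_eq, ← nrm_sq]; ring
        rw [le_div_iff₀ hs_pos]
        calc rowNorm (M3 (Quad.X (scaledProj Bv Fp))) i * Real.sqrt n3
            ≤ (cW * x) * Real.sqrt n3 :=
              mul_le_mul_of_nonneg_right hR (Real.sqrt_nonneg _)
          _ = cW * (Real.sqrt n3 * x) := by ring
          _ ≤ Bv := scaleFac_mul_le hBv_pos.le hx0 n3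
      have h2 : norm2inf (M3 (Quad.X (scaledProj Bv Fp))) ≤ Bv / Real.sqrt n3 :=
        norm2inf_le hb
      calc Real.sqrt n3 * norm2inf (M3 (Quad.X (scaledProj Bv Fp)))
          ≤ Real.sqrt n3 * (Bv / Real.sqrt n3) :=
            mul_le_mul_of_nonneg_left h2 (Real.sqrt_nonneg _)
        _ = Bv := by field_simp


end ScaledGD
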